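/- arXiv:2302.09235 — 5 statements merged into one kernel-verified Lean document; each statement's English description precedes it below -/
import Mathlib

section
/- For every weight vector w ∈ ℝ^{md} and every direction v ∈ ℝ^{md}, the Hessian of the empirical loss satisfies the self-bounded weak-convexity property ⟨v, ∇²F̂(w) v⟩ ≥ −(L·R²/√m)·F̂(w)·‖v‖², i.e., λ_min(∇²F̂(w)) ≥ −(L·R²/√m)·F̂(w). -/
open scoped BigOperators

/-!
Along the line `t ↦ w + t • v` the second derivative of `f ∘ G` is
`f''(G w) (G')² + f'(G w) G''`: convexity makes the first term nonnegative, and self-boundedness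
bounds the second from below by `-f(G w) |G''|`. For the margin `G = y_i Φ(·, x_i)` one has
`G'' = (y_i / √m) ∑_j a_j σ''(⟨w_j, x_i⟩) ⟨v_j, x_i⟩²`, which Cauchy–Schwarz bounds by
`L R² ‖v‖² / √m`; averaging over the samples turns `∑ f(G_i w) / n` into `F̂(w)`.
-/

/-- Two-layer network `Φ(w,x) = (1/√m) ∑_j a_j σ(⟨w_j, x⟩)`. -/
noncomputable def Phi {m d : ℕ} (a : Fin m → ℝ) (σ : ℝ → ℝ)
    (w : EuclideanSpace ℝ (Fin m × Fin d)) (x : EuclideanSpace ℝ (Fin d)) : ℝ :=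
  (1 / Real.sqrt m) * ∑ j : Fin m, a j * σ (∑ i : Fin d, w (j, i) * x i)

/-- Empirical loss `F̂(w) = (1/n) ∑_i f(y_i Φ(w, x_i))`. -/
noncomputable def empLoss {m d n : ℕ} (a : Fin m → ℝ) (σ f : ℝ → ℝ)
    (x : Fin n → EuclideanSpace ℝ (Fin d)) (y : Fin n → ℝ)
    (w : EuclideanSpace ℝ (Fin m × Fin d)) : ℝ :=
  (1 / (n : ℝ)) * ∑ i : Fin n, f (y i * Phi a σ w (x i))

open Set

section Calculus

variable {E : Type*} [NormedAddCommGroup E] [NormedSpace ℝ E]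

theorem iteratedFDeriv_apply_const_eq_iteratedDeriv_line {n : ℕ} {F : E → ℝ}
    (hF : ContDiff ℝ n F) (w v : E) :
    iteratedFDeriv ℝ n F w (fun _ => v) = iteratedDeriv n (fun t : ℝ => F (w + t • v)) 0 := by
  have hshift : ContDiff ℝ n fun z => F (w + z) := hF.comp (contDiff_const.add contDiff_id)
  have hline : (fun t : ℝ => F (w + t • v)) =
      (fun z => F (w + z)) ∘ ContinuousLinearMap.toSpanSingleton ℝ v := rfl
  rw [iteratedDeriv_eq_iteratedFDeriv, hline,
    ContinuousLinearMap.iteratedFDeriv_comp_right _ hshift _ le_rfl,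
    ContinuousMultilinearMap.compContinuousLinearMap_apply, iteratedFDeriv_comp_add_left]
  simp

theorem iteratedFDeriv_const_mul_apply {n : ℕ} {h : E → ℝ} (hh : ContDiff ℝ n h)
    (c : ℝ) (w : E) (u : Fin n → E) :
    iteratedFDeriv ℝ n (fun z => c * h z) w u = c * iteratedFDeriv ℝ n h w u := by
  simpa using congrArg (· u) (iteratedFDeriv_const_smul_apply' (a := c) hh.contDiffAt)

theorem iteratedFDeriv_fun_sum_mul_apply {ι : Type*} {s : Finset ι} {n : ℕ} {h : ι → E → ℝ}
    (hh : ∀ i ∈ s, ContDiff ℝ n (h i)) (c : ι → ℝ) (w : E) (u : Fin n → E) :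
    iteratedFDeriv ℝ n (fun z => ∑ i ∈ s, c i * h i z) w u =
      ∑ i ∈ s, c i * iteratedFDeriv ℝ n (h i) w u := by
  rw [iteratedFDeriv_fun_sum_apply fun i hi => (contDiff_const.mul (hh i hi)).contDiffAt,
    sum_apply]
  exact Finset.sum_congr rfl fun i hi => iteratedFDeriv_const_mul_apply (hh i hi) (c i) w u

theorem iteratedFDeriv_comp_clm_apply_const {n : ℕ} {σ : ℝ → ℝ} (hσ : ContDiff ℝ n σ)
    (ℓ : E →L[ℝ] ℝ) (w v : E) :
    iteratedFDeriv ℝ n (fun z => σ (ℓ z)) w (fun _ => v) = ℓ v ^ n * iteratedDeriv n σ (ℓ w) := by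
  rw [show (fun z => σ (ℓ z)) = σ ∘ ℓ from rfl, ℓ.iteratedFDeriv_comp_right hσ w le_rfl,
    ContinuousMultilinearMap.compContinuousLinearMap_apply,
    iteratedFDeriv_apply_eq_iteratedDeriv_mul_prod]
  simp

theorem ConvexOn.iteratedDeriv_two_nonneg {f : ℝ → ℝ} (hf : ConvexOn ℝ univ f)
    (hd : Differentiable ℝ f) (u : ℝ) : 0 ≤ iteratedDeriv 2 f u := by
  rw [iteratedDeriv_succ', iteratedDeriv_one]
  exact (monotoneOn_univ.mp (hf.monotoneOn_deriv fun z _ => hd z)).deriv_nonneg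

def SelfBounded (f : ℝ → ℝ) : Prop :=
  ∀ u, |deriv f u| ≤ f u

theorem SelfBounded.nonneg {f : ℝ → ℝ} (hf : SelfBounded f) (u : ℝ) : 0 ≤ f u :=
  (abs_nonneg _).trans (hf u)

theorem SelfBounded.neg_mul_abs_le_iteratedFDeriv_two_comp {f : ℝ → ℝ} {G : E → ℝ}
    (hf : SelfBounded f) (hconv : ConvexOn ℝ univ f) (hf2 : ContDiff ℝ 2 f) (hG : ContDiff ℝ 2 G)
    (w v : E) :
    -(f (G w) * |iteratedFDeriv ℝ 2 G w (fun _ => v)|) ≤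
      iteratedFDeriv ℝ 2 (fun z => f (G z)) w (fun _ => v) := by
  set g : ℝ → ℝ := fun t => G (w + t • v)
  have hg : ContDiff ℝ 2 g := hG.comp (contDiff_const.add (contDiff_id.smul contDiff_const))
  have hg0 : g 0 = G w := by simp [g]
  rw [iteratedFDeriv_apply_const_eq_iteratedDeriv_line hG,
    iteratedFDeriv_apply_const_eq_iteratedDeriv_line (F := fun z => f (G z)) (hf2.comp hG)]
  change -(f (G w) * |iteratedDeriv 2 g 0|) ≤ iteratedDeriv 2 (f ∘ g) 0
  rw [iteratedDeriv_comp_two hf2.contDiffAt hg.contDiffAt, hg0]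
  have hcurv : 0 ≤ iteratedDeriv 2 f (G w) * deriv g 0 ^ 2 :=
    mul_nonneg (hconv.iteratedDeriv_two_nonneg (hf2.differentiable two_ne_zero) _) (sq_nonneg _)
  have hslope : -(f (G w) * |iteratedDeriv 2 g 0|) ≤ deriv f (G w) * iteratedDeriv 2 g 0 := by
    calc -(f (G w) * |iteratedDeriv 2 g 0|) ≤ -(|deriv f (G w)| * |iteratedDeriv 2 g 0|) :=
          neg_le_neg (mul_le_mul_of_nonneg_right (hf _) (abs_nonneg _))
      _ ≤ deriv f (G w) * iteratedDeriv 2 g 0 := by rw [← abs_mul]; exact neg_abs_le _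
  linarith

theorem SelfBounded.neg_mul_sum_le_iteratedFDeriv_two_sum {ι : Type*} {s : Finset ι}
    {f : ℝ → ℝ} {G : ι → E → ℝ} (hf : SelfBounded f)
    (hconv : ConvexOn ℝ univ f) (hf2 : ContDiff ℝ 2 f) (hG : ∀ i ∈ s, ContDiff ℝ 2 (G i))
    {c : ι → ℝ} (hc : ∀ i ∈ s, 0 ≤ c i) {w v : E} {B : ℝ}
    (hB : ∀ i ∈ s, |iteratedFDeriv ℝ 2 (G i) w (fun _ => v)| ≤ B) :
    -(B * ∑ i ∈ s, c i * f (G i w)) ≤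
      iteratedFDeriv ℝ 2 (fun z => ∑ i ∈ s, c i * f (G i z)) w (fun _ => v) := by
  rw [iteratedFDeriv_fun_sum_mul_apply (h := fun i z => f (G i z))
    (fun i hi => hf2.comp (hG i hi)), Finset.mul_sum, ← Finset.sum_neg_distrib]
  refine Finset.sum_le_sum fun i hi => ?_
  calc -(B * (c i * f (G i w)))
        ≤ c i * -(f (G i w) * |iteratedFDeriv ℝ 2 (G i) w (fun _ => v)|) := by
        have := mul_le_mul_of_nonneg_left (hB i hi) (mul_nonneg (hc i hi) (hf.nonneg (G i w)))
        linarith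
    _ ≤ c i * iteratedFDeriv ℝ 2 (fun z => f (G i z)) w (fun _ => v) :=
        mul_le_mul_of_nonneg_left
          (hf.neg_mul_abs_le_iteratedFDeriv_two_comp hconv hf2 (hG i hi) w v) (hc i hi)

end Calculus

section Network

noncomputable def rowInner {ι κ : Type*} [Fintype κ] (x : EuclideanSpace ℝ κ) (j : ι) :
    EuclideanSpace ℝ (ι × κ) →L[ℝ] ℝ :=
  ∑ k, x k • EuclideanSpace.proj (j, k)

theorem rowInner_apply {ι κ : Type*} [Fintype κ] (x : EuclideanSpace ℝ κ) (j : ι)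
    (w : EuclideanSpace ℝ (ι × κ)) : rowInner x j w = ∑ k, w (j, k) * x k := by
  simp [rowInner, mul_comm]

theorem sum_rowInner_sq_le {ι κ : Type*} [Fintype ι] [Fintype κ] (x : EuclideanSpace ℝ κ)
    (v : EuclideanSpace ℝ (ι × κ)) : ∑ j, rowInner x j v ^ 2 ≤ ‖x‖ ^ 2 * ‖v‖ ^ 2 := by
  simp only [EuclideanSpace.norm_sq_eq, Real.norm_eq_abs, sq_abs, Fintype.sum_prod_type,
    Finset.mul_sum, rowInner_apply]
  refine Finset.sum_le_sum fun j _ => ?_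
  rw [← Finset.mul_sum, mul_comm]
  exact Finset.sum_mul_sq_le_sq_mul_sq _ _ _

variable {m d : ℕ} (a : Fin m → ℝ) (σ : ℝ → ℝ) (x : EuclideanSpace ℝ (Fin d))

theorem Phi_eq_sum_rowInner (w : EuclideanSpace ℝ (Fin m × Fin d)) :
    Phi a σ w x = ∑ j, (1 / Real.sqrt m * a j) * σ (rowInner x j w) := by
  simp only [Phi, rowInner_apply, Finset.mul_sum, mul_assoc]

theorem contDiff_Phi {n : ℕ} (hσ : ContDiff ℝ n σ) : ContDiff ℝ n fun w => Phi a σ w x := by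
  simp only [Phi_eq_sum_rowInner]
  exact ContDiff.sum fun j _ => contDiff_const.mul (hσ.comp (rowInner x j).contDiff)

theorem iteratedFDeriv_Phi_apply_const {n : ℕ} (hσ : ContDiff ℝ n σ)
    (w v : EuclideanSpace ℝ (Fin m × Fin d)) :
    iteratedFDeriv ℝ n (fun w => Phi a σ w x) w (fun _ => v) =
      ∑ j, (1 / Real.sqrt m * a j) * (rowInner x j v ^ n * iteratedDeriv n σ (rowInner x j w)) := by
  simp only [Phi_eq_sum_rowInner]
  rw [iteratedFDeriv_fun_sum_mul_apply (h := fun j w => σ (rowInner x j w))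
    (fun j _ => hσ.comp (rowInner x j).contDiff)]
  simp only [iteratedFDeriv_comp_clm_apply_const hσ]

theorem abs_iteratedFDeriv_two_Phi_le {L R : ℝ} (ha : ∀ j, |a j| ≤ 1) (hσ : ContDiff ℝ 2 σ)
    (hσ'' : ∀ u, |iteratedDeriv 2 σ u| ≤ L) (hx : ‖x‖ ≤ R)
    (w v : EuclideanSpace ℝ (Fin m × Fin d)) :
    |iteratedFDeriv ℝ 2 (fun w => Phi a σ w x) w (fun _ => v)| ≤
      L * R ^ 2 / Real.sqrt m * ‖v‖ ^ 2 := by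
  have hL : 0 ≤ L := (abs_nonneg _).trans (hσ'' 0)
  have hterm : ∀ j, |(1 / Real.sqrt m * a j) * (rowInner x j v ^ 2 *
      iteratedDeriv 2 σ (rowInner x j w))| ≤ 1 / Real.sqrt m * (L * rowInner x j v ^ 2) := by
    intro j
    rw [abs_mul, abs_mul, abs_mul, abs_of_nonneg (by positivity : 0 ≤ 1 / Real.sqrt m),
      abs_sq, mul_assoc]
    gcongr (1 / Real.sqrt m) * ?_
    calc |a j| * (rowInner x j v ^ 2 * |iteratedDeriv 2 σ (rowInner x j w)|)
        ≤ 1 * (rowInner x j v ^ 2 * L) := by gcongr; exacts [ha j, hσ'' _]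
      _ = L * rowInner x j v ^ 2 := by ring
  rw [iteratedFDeriv_Phi_apply_const a σ x hσ]
  calc _ ≤ ∑ j, 1 / Real.sqrt m * (L * rowInner x j v ^ 2) :=
        (Finset.abs_sum_le_sum_abs _ _).trans (Finset.sum_le_sum fun j _ => hterm j)
    _ = 1 / Real.sqrt m * L * ∑ j, rowInner x j v ^ 2 := by
        rw [Finset.mul_sum]; simp only [mul_assoc]
    _ ≤ 1 / Real.sqrt m * L * (R ^ 2 * ‖v‖ ^ 2) := by
        gcongr
        exact (sum_rowInner_sq_le x v).trans (by gcongr)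
    _ = L * R ^ 2 / Real.sqrt m * ‖v‖ ^ 2 := by ring

end Network

theorem self_bounded_weak_convexity_general
    {m d n : ℕ} (L R : ℝ)
    (a : Fin m → ℝ) (ha : ∀ j, a j = 1 ∨ a j = -1)
    (σ : ℝ → ℝ) (hσ : ContDiff ℝ 2 σ)
    (hσ'' : ∀ u, |deriv (deriv σ) u| ≤ L)
    (f : ℝ → ℝ) (hf : ContDiff ℝ 2 f) (hfconv : ConvexOn ℝ Set.univ f)
    (hfself : ∀ u, |deriv f u| ≤ f u)
    (x : Fin n → EuclideanSpace ℝ (Fin d)) (y : Fin n → ℝ)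
    (hx : ∀ i, ‖x i‖ ≤ R) (hy : ∀ i, y i = 1 ∨ y i = -1)
    (w v : EuclideanSpace ℝ (Fin m × Fin d)) :
    iteratedFDeriv ℝ 2 (empLoss a σ f x y) w ![v, v]
      ≥ -((L * R ^ 2 / Real.sqrt m) * empLoss a σ f x y w * ‖v‖ ^ 2) := by
  have hself : SelfBounded f := hfself
  set G : Fin n → EuclideanSpace ℝ (Fin m × Fin d) → ℝ := fun i z => y i * Phi a σ z (x i)
  have hG : ∀ i, ContDiff ℝ 2 (G i) := fun i => contDiff_const.mul (contDiff_Phi a σ (x i) hσ)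
  have hGcurv : ∀ i, |iteratedFDeriv ℝ 2 (G i) w (fun _ => v)| ≤
      L * R ^ 2 / Real.sqrt m * ‖v‖ ^ 2 := by
    intro i
    have hyi : |y i| = 1 := by rcases hy i with h | h <;> simp [h]
    rw [iteratedFDeriv_const_mul_apply (contDiff_Phi a σ (x i) hσ), abs_mul, hyi, one_mul]
    exact abs_iteratedFDeriv_two_Phi_le a σ (x i)
      (fun j => by rcases ha j with h | h <;> simp [h]) hσ
      (by simpa [iteratedDeriv_succ'] using hσ'') (hx i) w v
  have hloss : empLoss a σ f x y = fun z => ∑ i, 1 / (n : ℝ) * f (G i z) :=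
    funext fun z => Finset.mul_sum _ _ _
  have hvv : ![v, v] = fun _ => v := by rw [Matrix.vec_single_eq_const, Matrix.vecCons_const]
  rw [hvv, hloss]
  exact (le_of_eq (by ring)).trans (hself.neg_mul_sum_le_iteratedFDeriv_two_sum hfconv hf
    (fun i _ => hG i) (fun i _ => by positivity) (fun i _ => hGcurv i))

/-- self-bounded weak convexity of the empirical loss:
`⟨v, ∇²F̂(w) v⟩ ≥ −(L R²/√m) F̂(w) ‖v‖²`. -/
theorem self_bounded_weak_convexity
    {m d n : ℕ} (ℓ L R : ℝ)
    (a : Fin m → ℝ) (ha : ∀ j, a j = 1 ∨ a j = -1)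
    (σ : ℝ → ℝ) (hσ : ContDiff ℝ 2 σ)
    (hσ' : ∀ u, |deriv σ u| ≤ ℓ) (hσ'' : ∀ u, |deriv (deriv σ) u| ≤ L)
    (f : ℝ → ℝ) (hf : ContDiff ℝ 2 f) (hfconv : ConvexOn ℝ Set.univ f)
    (hfnonneg : ∀ u, 0 ≤ f u) (hfself : ∀ u, |deriv f u| ≤ f u)
    (x : Fin n → EuclideanSpace ℝ (Fin d)) (y : Fin n → ℝ)
    (hx : ∀ i, ‖x i‖ ≤ R) (hy : ∀ i, y i = 1 ∨ y i = -1)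
    (w v : EuclideanSpace ℝ (Fin m × Fin d)) :
    iteratedFDeriv ℝ 2 (empLoss a σ f x y) w ![v, v]
      ≥ -((L * R ^ 2 / Real.sqrt m) * empLoss a σ f x y w * ‖v‖ ^ 2) :=
  self_bounded_weak_convexity_general L R a ha σ hσ hσ'' f hf hfconv hfself x y hx hy w v
end

section
/- (Generalized local quasi-convexity.) Let F̂ : ℝ^{d'} → ℝ be twice continuously differentiable and nonnegative, and suppose it is self-bounded weakly convex with parameter κ > 0, i.e., ⟨v, ∇²F̂(w) v⟩ ≥ −κ·F̂(w)·‖v‖² for all w, v ∈ ℝ^{d'}. Let w_1, w_2 ∈ ℝ^{d'} satisfy ‖w_1 − w_2‖ ≤ D for some D < √(2/κ), and set τ := (1 − κD²/2)^{−1}. Then for every point v on the line segment [w_1, w_2], F̂(v) ≤ τ·max{F̂(w_1), F̂(w_2)}. -/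
/-!
Restrict `F` to the line `g t = F (w₂ + t • (w₁ - w₂))`, so that `g'' ≥ -K g` on `[0, 1]` with
`K = κ ‖w₁ - w₂‖²`. Let `a` maximise `g` on `[0, 1]`. If `a` is interior then `g' a = 0`, and
`g'' ≥ -K g a` together with Taylor's formula between `a` and `0` gives `g a - K g a / 2 ≤ g 0`;
so in every case `(1 - K / 2) · max g ≤ max (g 0) (g 1)`.
-/

open Set

section LineRestriction

variable {E F : Type*} [NormedAddCommGroup E] [NormedSpace ℝ E]
  [NormedAddCommGroup F] [NormedSpace ℝ F] {f : E → F}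

theorem Differentiable.hasDerivAt_comp_add_smul (hf : Differentiable ℝ f) (x v : E) (t : ℝ) :
    HasDerivAt (fun s : ℝ => f (x + s • v)) (fderiv ℝ f (x + t • v) v) t := by
  have hline : HasDerivAt (fun s : ℝ => x + s • v) v t := by
    simpa using ((hasDerivAt_id t).smul_const v).const_add x
  exact (hf _).hasFDerivAt.comp_hasDerivAt t hline

theorem ContDiff.hasDerivAt_fderiv_comp_add_smul (hf : ContDiff ℝ 2 f) (x v : E) (t : ℝ) :
    HasDerivAt (fun s : ℝ => fderiv ℝ f (x + s • v) v)
      (iteratedFDeriv ℝ 2 f (x + t • v) ![v, v]) t := by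
  have hf' : Differentiable ℝ (fderiv ℝ f) :=
    (hf.fderiv_right (m := 1) (by norm_num)).differentiable (by norm_num)
  rw [iteratedFDeriv_two_apply]
  exact (ContinuousLinearMap.apply ℝ F v).hasFDerivAt.comp_hasDerivAt t
    (hf'.hasDerivAt_comp_add_smul x v t)

end LineRestriction

section SecondDerivativeBound

variable {g g' g'' : ℝ → ℝ}

theorem sub_half_mul_sq_le_of_deriv_eq_zero {C a b : ℝ} (hab : b ≤ a)
    (hg : ∀ t, HasDerivAt g (g' t) t) (hg' : ∀ t, HasDerivAt g' (g'' t) t)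
    (hcrit : g' a = 0) (hC : ∀ t ∈ Icc b a, -C ≤ g'' t) :
    g a - C / 2 * (a - b) ^ 2 ≤ g b := by
  -- `h` is `g` corrected by a parabola so that `h'' ≥ 0` and `h' a = 0`
  set h : ℝ → ℝ := fun t => g t + C / 2 * (t - a) ^ 2
  set h' : ℝ → ℝ := fun t => g' t + C * (t - a)
  have hh : ∀ t, HasDerivAt h (h' t) t := fun t =>
    ((hg t).fun_add ((((hasDerivAt_id' t).sub_const a).fun_pow 2).const_mul (C / 2))).congr_deriv
      (by simp only [h']; ring)
  have hh' : ∀ t, HasDerivAt h' (g'' t + C) t := fun t =>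
    ((hg' t).fun_add (((hasDerivAt_id' t).sub_const a).const_mul C)).congr_deriv (by ring)
  have h'_mono : MonotoneOn h' (Icc b a) :=
    monotoneOn_of_hasDerivWithinAt_nonneg (convex_Icc b a)
      (fun t _ => (hh' t).continuousAt.continuousWithinAt)
      (fun t _ => (hh' t).hasDerivWithinAt)
      (fun t ht => by linarith [hC t (interior_subset ht)])
  have h_anti : AntitoneOn h (Icc b a) :=
    antitoneOn_of_hasDerivWithinAt_nonpos (convex_Icc b a)
      (fun t _ => (hh t).continuousAt.continuousWithinAt)
      (fun t _ => (hh t).hasDerivWithinAt)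
      (fun t ht => by
        have := h'_mono (interior_subset ht) (right_mem_Icc.2 hab) (interior_subset ht).2
        simpa [h', hcrit] using this)
  have := h_anti (left_mem_Icc.2 hab) (right_mem_Icc.2 hab) hab
  simp only [h, sub_self, ne_eq, OfNat.ofNat_ne_zero, not_false_eq_true, zero_pow, mul_zero,
    add_zero] at this
  linarith [sub_sq_comm a b]

theorem one_sub_half_mul_le_max_of_neg_mul_le_deriv2 {K : ℝ} (hK : 0 ≤ K)
    (hg : ∀ t, HasDerivAt g (g' t) t) (hg' : ∀ t, HasDerivAt g' (g'' t) t)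
    (hnonneg : ∀ t ∈ Icc (0 : ℝ) 1, 0 ≤ g t) (hg'' : ∀ t ∈ Icc (0 : ℝ) 1, -(K * g t) ≤ g'' t)
    {t : ℝ} (ht : t ∈ Icc (0 : ℝ) 1) :
    (1 - K / 2) * g t ≤ max (g 0) (g 1) := by
  obtain ⟨a, ha, hmax⟩ := isCompact_Icc.exists_isMaxOn (nonempty_Icc.2 zero_le_one)
    (fun s _ => (hg s).continuousAt.continuousWithinAt)
  have hga_nonneg := hnonneg a ha
  have hga : (1 - K / 2) * g a ≤ max (g 0) (g 1) := by
    rcases ha.1.eq_or_lt with rfl | h0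
    · nlinarith [le_max_left (g 0) (g 1)]
    rcases ha.2.eq_or_lt with rfl | h1
    · nlinarith [le_max_right (g 0) (g 1)]
    have hcrit : g' a = 0 := (hmax.isLocalMax (Icc_mem_nhds h0 h1)).hasDerivAt_eq_zero (hg a)
    have hbound : ∀ s ∈ Icc 0 a, -(K * g a) ≤ g'' s := fun s hs => by
      have hs' : s ∈ Icc (0 : ℝ) 1 := ⟨hs.1, hs.2.trans h1.le⟩
      linarith [hg'' s hs', mul_le_mul_of_nonneg_left (hmax hs' : g s ≤ g a) hK]
    have htaylor := sub_half_mul_sq_le_of_deriv_eq_zero h0.le hg hg' hcrit hbound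
    rw [sub_zero] at htaylor
    have ha_sq : a ^ 2 ≤ 1 := by nlinarith
    nlinarith [le_max_left (g 0) (g 1), mul_le_mul_of_nonneg_left ha_sq (mul_nonneg hK hga_nonneg)]
  rcases le_or_gt (1 - K / 2) 0 with hK2 | hK2
  · nlinarith [hnonneg t ht, hnonneg 0 (left_mem_Icc.2 zero_le_one), le_max_left (g 0) (g 1)]
  · exact (mul_le_mul_of_nonneg_left (hmax ht) hK2.le).trans hga

end SecondDerivativeBound

/-- generalized local quasi-convexity for self-bounded weakly convex
functions. -/
theorem generalized_local_quasi_convexity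
    {d' : ℕ} (F : EuclideanSpace ℝ (Fin d') → ℝ)
    (hF : ContDiff ℝ 2 F) (hFnonneg : ∀ w, 0 ≤ F w)
    (κ : ℝ) (hκ : 0 < κ)
    (hSBWC : ∀ w v : EuclideanSpace ℝ (Fin d'),
      iteratedFDeriv ℝ 2 F w ![v, v] ≥ -(κ * F w * ‖v‖ ^ 2))
    (w₁ w₂ : EuclideanSpace ℝ (Fin d')) (D : ℝ)
    (hD : ‖w₁ - w₂‖ ≤ D) (hDκ : D < Real.sqrt (2 / κ)) :
    ∀ α : ℝ, α ∈ Set.Icc (0 : ℝ) 1 →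
      F (α • w₁ + (1 - α) • w₂) ≤ (1 - κ * D ^ 2 / 2)⁻¹ * max (F w₁) (F w₂) := by
  intro α hα
  set v := w₁ - w₂
  have hD0 : 0 ≤ D := (norm_nonneg v).trans hD
  have hτ : 0 < 1 - κ * D ^ 2 / 2 := by
    have := (lt_div_iff₀' hκ).1 ((Real.lt_sqrt hD0).1 hDκ)
    linarith
  have hvD : ‖v‖ ^ 2 ≤ D ^ 2 := pow_le_pow_left₀ (norm_nonneg v) hD 2
  have hline := one_sub_half_mul_le_max_of_neg_mul_le_deriv2 (g := fun t => F (w₂ + t • v))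
    (mul_nonneg hκ.le (sq_nonneg ‖v‖))
    ((hF.differentiable (by norm_num)).hasDerivAt_comp_add_smul w₂ v)
    (hF.hasDerivAt_fderiv_comp_add_smul w₂ v) (fun t _ => hFnonneg _)
    (fun t _ => by linarith [hSBWC (w₂ + t • v) v, mul_right_comm κ (‖v‖ ^ 2) (F (w₂ + t • v))]) hα
  simp only [zero_smul, add_zero, one_smul, v, add_sub_cancel] at hline
  have hpt : α • w₁ + (1 - α) • w₂ = w₂ + α • v := by module
  rw [hpt, le_inv_mul_iff₀ hτ]
  calc (1 - κ * D ^ 2 / 2) * F (w₂ + α • v)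
      ≤ (1 - κ * ‖v‖ ^ 2 / 2) * F (w₂ + α • v) := by
        gcongr
        exact hFnonneg _
    _ ≤ max (F w₁) (F w₂) := by simpa only [max_comm, mul_div_assoc] using hline
end

section
/- Fix arbitrary w_1, w_2 ∈ ℝ^{md}, any constant λ > 1, and suppose the width m satisfies √m ≥ λ·(L·R²/2)·‖w_1 − w_2‖². Then for every point v on the line segment [w_1, w_2], the empirical loss satisfies F̂(v) ≤ (1 − 1/λ)^{−1}·max{F̂(w_1), F̂(w_2)}. -/
open scoped BigOperators

/-! Along the segment, `g t := F̂ (t • w₁ + (1 - t) • w₂)` is nonnegative, and each margin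
`y_i Φ` has second derivative in `t` of size at most `ε := L R² ‖w₁ - w₂‖² / √m`; convexity and
self-boundedness of `f` then give `g'' ≥ -ε g`. Any nonnegative `g` with `g'' ≥ -ε g` satisfies
`(1 - ε / 2) g ≤ max (g 0) (g 1)` on `[0, 1]`, and the width condition says `ε / 2 ≤ 1 / λ`. -/

open Set

theorem one_sub_mul_le_max_of_neg_mul_le_deriv2 {g g' g'' : ℝ → ℝ} {ε : ℝ} (hε : 0 ≤ ε)
    (hg : ∀ t, HasDerivAt g (g' t) t) (hg' : ∀ t, HasDerivAt g' (g'' t) t)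
    (hg_nonneg : ∀ t, 0 ≤ g t) (hg'' : ∀ t, -(ε * g t) ≤ g'' t) {t : ℝ} (ht : t ∈ Icc 0 1) :
    (1 - ε / 2) * g t ≤ max (g 0) (g 1) := by
  have hg_cont : Continuous g := continuous_iff_continuousAt.2 fun t ↦ (hg t).continuousAt
  obtain ⟨t₀, ht₀, hmax⟩ :=
    isCompact_Icc.exists_isMaxOn (nonempty_Icc.2 zero_le_one) hg_cont.continuousOn
  set M := g t₀
  have hM0 : 0 ≤ M := hg_nonneg t₀
  -- Adding `ε M t² / 2` compensates the possible concavity of `g` on `[0, 1]`, where `g ≤ M`.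
  have h_conv : ConvexOn ℝ (Icc 0 1) fun s ↦ g s + ε * M / 2 * s ^ 2 := by
    refine convexOn_of_hasDerivWithinAt2_nonneg (convex_Icc 0 1)
      (f' := fun s ↦ g' s + ε * M * s) (f'' := fun s ↦ g'' s + ε * M)
      (by fun_prop) (fun s _ ↦ ?_) (fun s _ ↦ ?_) (fun s hs ↦ ?_)
    · exact ((hg s).add (by simpa using ((hasDerivAt_id s).pow 2).const_mul (ε * M / 2)))
        |>.congr_deriv (by ring) |>.hasDerivWithinAt
    · exact ((hg' s).add ((hasDerivAt_id s).const_mul (ε * M))).congr_deriv (by ring)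
        |>.hasDerivWithinAt
    · have : g s ≤ M := hmax (interior_subset hs)
      nlinarith [hg'' s]
  have hM : M + ε * M / 2 * t₀ ^ 2 ≤ max (g 0) (g 1) + ε * M / 2 := by
    have := h_conv.le_on_segment (left_mem_Icc.2 zero_le_one) (right_mem_Icc.2 zero_le_one)
      (by rwa [segment_eq_Icc zero_le_one])
    simp only [ne_eq, OfNat.ofNat_ne_zero, not_false_eq_true, zero_pow, mul_zero, add_zero,
      one_pow, mul_one] at this
    exact this.trans (max_le (le_add_of_le_of_nonneg (le_max_left _ _) (by positivity))
      (add_le_add_left (le_max_right _ _) _))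
  have h0 : 0 ≤ max (g 0) (g 1) := (hg_nonneg 0).trans (le_max_left _ _)
  have hgt : g t ≤ M := hmax ht
  rcases le_total ε 2 with h2 | h2
  · have : 0 ≤ ε * M / 2 * t₀ ^ 2 := by positivity
    nlinarith [mul_le_mul_of_nonneg_left hgt (by linarith : (0:ℝ) ≤ 1 - ε / 2)]
  · nlinarith [hg_nonneg t]

theorem neg_mul_le_deriv2_comp {f : ℝ → ℝ} (hf : ContDiff ℝ 2 f) (hf_conv : ConvexOn ℝ univ f)
    (hf_self : ∀ z, |deriv f z| ≤ f z) {ε q : ℝ} (hq : |q| ≤ ε) (z p : ℝ) :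
    -(ε * f z) ≤ deriv (deriv f) z * p * p + deriv f z * q := by
  have hf'' : 0 ≤ deriv (deriv f) z :=
    (monotoneOn_univ.1 <| hf_conv.monotoneOn_deriv fun z _ ↦
      hf.differentiable two_ne_zero z).deriv_nonneg
  have hfq : |deriv f z * q| ≤ f z * ε := by
    rw [abs_mul]
    exact mul_le_mul (hf_self z) hq (abs_nonneg q) ((abs_nonneg _).trans (hf_self z))
  nlinarith [neg_abs_le (deriv f z * q), mul_nonneg hf'' (mul_self_nonneg p)]

theorem one_sub_mul_le_max_of_sum_comp {ι : Type*} [Fintype ι] {f : ℝ → ℝ}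
    (hf : ContDiff ℝ 2 f) (hf_conv : ConvexOn ℝ univ f) (hf_nonneg : ∀ z, 0 ≤ f z)
    (hf_self : ∀ z, |deriv f z| ≤ f z) {u u' u'' : ι → ℝ → ℝ}
    (hu : ∀ i t, HasDerivAt (u i) (u' i t) t) (hu' : ∀ i t, HasDerivAt (u' i) (u'' i t) t)
    {ε : ℝ} (hε : 0 ≤ ε) (hu'' : ∀ i t, |u'' i t| ≤ ε) {c : ℝ} (hc : 0 ≤ c)
    {t : ℝ} (ht : t ∈ Icc 0 1) :
    (1 - ε / 2) * (c * ∑ i, f (u i t)) ≤ max (c * ∑ i, f (u i 0)) (c * ∑ i, f (u i 1)) := by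
  have hf₁ : ∀ z, HasDerivAt f (deriv f z) z := fun z ↦
    (hf.differentiable two_ne_zero z).hasDerivAt
  have hf₂ : ∀ z, HasDerivAt (deriv f) (deriv (deriv f) z) z := fun z ↦
    (hf.differentiable_deriv_two z).hasDerivAt
  refine one_sub_mul_le_max_of_neg_mul_le_deriv2 hε
    (g' := fun t ↦ c * ∑ i, deriv f (u i t) * u' i t)
    (g'' := fun t ↦ c * ∑ i, (deriv (deriv f) (u i t) * u' i t * u' i t
      + deriv f (u i t) * u'' i t))
    (fun t ↦ .const_mul c (.fun_sum fun i _ ↦ (hf₁ _).comp t (hu i t)))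
    (fun t ↦ .const_mul c (.fun_sum fun i _ ↦ (((hf₂ _).comp t (hu i t)).mul (hu' i t)).congr_deriv
      (by simp only [Function.comp_apply])))
    (fun t ↦ mul_nonneg hc (Finset.sum_nonneg fun i _ ↦ hf_nonneg _)) (fun t ↦ ?_) ht
  calc -(ε * (c * ∑ i, f (u i t))) = c * ∑ i, -(ε * f (u i t)) := by
        rw [Finset.sum_neg_distrib, ← Finset.mul_sum]; ring
    _ ≤ _ := mul_le_mul_of_nonneg_left (Finset.sum_le_sum fun i _ ↦
        neg_mul_le_deriv2_comp hf hf_conv hf_self (hu'' i t) _ _) hc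

section RidgeSum

variable {ι : Type*} [Fintype ι]

theorem hasDerivAt_const_mul_sum_comp_affine {σ σ' : ℝ → ℝ} (hσ : ∀ z, HasDerivAt σ (σ' z) z)
    (s : ℝ) (a b c : ι → ℝ) (t : ℝ) :
    HasDerivAt (fun t ↦ s * ∑ j, a j * σ (c j + t * b j))
      (s * ∑ j, a j * b j * σ' (c j + t * b j)) t :=
  .const_mul s <| .fun_sum fun j _ ↦
    (((hσ _).comp t ((hasDerivAt_mul_const (b j)).const_add (c j))).const_mul (a j)).congr_deriv
      (by ring)

theorem abs_sum_mul_comp_affine_le {a : ι → ℝ} (ha : ∀ j, |a j| ≤ 1) {τ : ℝ → ℝ} {L : ℝ}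
    (hτ : ∀ z, |τ z| ≤ L) (b c : ι → ℝ) (t : ℝ) :
    |∑ j, a j * b j * b j * τ (c j + t * b j)| ≤ L * ∑ j, b j ^ 2 := by
  rw [Finset.mul_sum]
  refine (Finset.abs_sum_le_sum_abs _ _).trans (Finset.sum_le_sum fun j _ ↦ ?_)
  calc |a j * b j * b j * τ (c j + t * b j)| = |a j| * |τ (c j + t * b j)| * b j ^ 2 := by
        simp only [abs_mul, ← sq_abs (b j)]; ring
    _ ≤ 1 * L * b j ^ 2 := by gcongr; exacts [ha j, hτ _]
    _ = L * b j ^ 2 := by rw [one_mul]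

end RidgeSum

theorem sum_sq_sum_mul_le_norm_sq_mul_norm_sq {ι κ : Type*} [Fintype ι] [Fintype κ]
    (v : EuclideanSpace ℝ (ι × κ)) (x : EuclideanSpace ℝ κ) :
    ∑ j, (∑ k, v (j, k) * x k) ^ 2 ≤ ‖v‖ ^ 2 * ‖x‖ ^ 2 := by
  simp only [EuclideanSpace.norm_sq_eq, Real.norm_eq_abs, sq_abs, Fintype.sum_prod_type]
  rw [Finset.sum_mul]
  exact Finset.sum_le_sum fun j _ ↦ Finset.sum_mul_sq_le_sq_mul_sq _ _ _

theorem Phi_smul_add_one_sub_smul {m d : ℕ} (a : Fin m → ℝ) (σ : ℝ → ℝ)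
    (w₁ w₂ : EuclideanSpace ℝ (Fin m × Fin d)) (x : EuclideanSpace ℝ (Fin d)) (t : ℝ) :
    Phi a σ (t • w₁ + (1 - t) • w₂) x = 1 / √m *
      ∑ j, a j * σ (∑ k, w₂ (j, k) * x k + t * ∑ k, (w₁ - w₂) (j, k) * x k) := by
  rw [show t • w₁ + (1 - t) • w₂ = w₂ + t • (w₁ - w₂) by module]
  simp only [Phi, PiLp.add_apply, PiLp.smul_apply, smul_eq_mul, add_mul, Finset.sum_add_distrib,
    mul_assoc, ← Finset.mul_sum]

theorem one_sub_mul_empLoss_le_max {m d n : ℕ} {L R : ℝ} {a : Fin m → ℝ} (ha : ∀ j, |a j| ≤ 1)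
    {σ : ℝ → ℝ} (hσ : ContDiff ℝ 2 σ) (hσ'' : ∀ z, |deriv (deriv σ) z| ≤ L)
    {f : ℝ → ℝ} (hf : ContDiff ℝ 2 f) (hf_conv : ConvexOn ℝ univ f) (hf_nonneg : ∀ z, 0 ≤ f z)
    (hf_self : ∀ z, |deriv f z| ≤ f z) {x : Fin n → EuclideanSpace ℝ (Fin d)}
    (hx : ∀ i, ‖x i‖ ≤ R) {y : Fin n → ℝ} (hy : ∀ i, |y i| ≤ 1)
    (w₁ w₂ : EuclideanSpace ℝ (Fin m × Fin d)) {α : ℝ} (hα : α ∈ Icc 0 1) :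
    (1 - L * R ^ 2 * ‖w₁ - w₂‖ ^ 2 / (2 * √m)) * empLoss a σ f x y (α • w₁ + (1 - α) • w₂)
      ≤ max (empLoss a σ f x y w₁) (empLoss a σ f x y w₂) := by
  set b : Fin n → Fin m → ℝ := fun i j ↦ ∑ k, (w₁ - w₂) (j, k) * x i k
  set c : Fin n → Fin m → ℝ := fun i j ↦ ∑ k, w₂ (j, k) * x i k
  set s : Fin n → ℝ := fun i ↦ y i * (1 / √m)
  have hσ₁ : ∀ z, HasDerivAt σ (deriv σ z) z := fun z ↦
    (hσ.differentiable two_ne_zero z).hasDerivAt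
  have hσ₂ : ∀ z, HasDerivAt (deriv σ) (deriv (deriv σ) z) z := fun z ↦
    (hσ.differentiable_deriv_two z).hasDerivAt
  have hL : 0 ≤ L := (abs_nonneg _).trans (hσ'' 0)
  have hu : ∀ i, (fun t ↦ y i * Phi a σ (t • w₁ + (1 - t) • w₂) (x i)) =
      fun t ↦ s i * ∑ j, a j * σ (c i j + t * b i j) := fun i ↦ funext fun t ↦ by
    rw [Phi_smul_add_one_sub_smul, mul_assoc]
  have hs : ∀ i, |s i| ≤ 1 / √m := fun i ↦ by
    rw [abs_mul, abs_of_nonneg (by positivity : 0 ≤ 1 / √m)]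
    exact mul_le_of_le_one_left (by positivity) (hy i)
  have hb : ∀ i, ∑ j, b i j ^ 2 ≤ ‖w₁ - w₂‖ ^ 2 * R ^ 2 := fun i ↦
    (sum_sq_sum_mul_le_norm_sq_mul_norm_sq _ _).trans (by gcongr; exact hx i)
  have key := one_sub_mul_le_max_of_sum_comp hf hf_conv hf_nonneg hf_self
    (u := fun i t ↦ y i * Phi a σ (t • w₁ + (1 - t) • w₂) (x i))
    (u' := fun i t ↦ s i * ∑ j, a j * b i j * deriv σ (c i j + t * b i j))
    (u'' := fun i t ↦ s i * ∑ j, a j * b i j * b i j * deriv (deriv σ) (c i j + t * b i j))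
    (fun i t ↦ hu i ▸ hasDerivAt_const_mul_sum_comp_affine hσ₁ (s i) a (b i) (c i) t)
    (fun i t ↦ hasDerivAt_const_mul_sum_comp_affine hσ₂ (s i) (fun j ↦ a j * b i j) (b i) (c i) t)
    (ε := 1 / √m * (L * (‖w₁ - w₂‖ ^ 2 * R ^ 2))) (by positivity) (fun i t ↦ by
      rw [abs_mul]
      exact mul_le_mul (hs i) ((abs_sum_mul_comp_affine_le ha hσ'' (b i) (c i) t).trans
        (mul_le_mul_of_nonneg_left (hb i) hL)) (abs_nonneg _) (by positivity))
    (c := 1 / n) (by positivity) hα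
  simp only [one_smul, zero_smul, sub_zero, sub_self, add_zero, zero_add] at key
  exact le_of_eq_of_le (by unfold empLoss; ring) (key.trans_eq (max_comm _ _))

theorem GLQC_of_wide_neural_nets_general
    {m d n : ℕ} (L R : ℝ)
    (a : Fin m → ℝ) (ha : ∀ j, a j = 1 ∨ a j = -1)
    (σ : ℝ → ℝ) (hσ : ContDiff ℝ 2 σ)
    (hσ'' : ∀ u, |deriv (deriv σ) u| ≤ L)
    (f : ℝ → ℝ) (hf : ContDiff ℝ 2 f) (hfconv : ConvexOn ℝ Set.univ f)
    (hfnonneg : ∀ u, 0 ≤ f u) (hfself : ∀ u, |deriv f u| ≤ f u)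
    (x : Fin n → EuclideanSpace ℝ (Fin d)) (y : Fin n → ℝ)
    (hx : ∀ i, ‖x i‖ ≤ R) (hy : ∀ i, y i = 1 ∨ y i = -1)
    (w₁ w₂ : EuclideanSpace ℝ (Fin m × Fin d))
    (lam : ℝ) (hlam : 1 < lam)
    (hm : lam * (L * R ^ 2 / 2) * ‖w₁ - w₂‖ ^ 2 ≤ Real.sqrt m) :
    ∀ α : ℝ, α ∈ Set.Icc (0 : ℝ) 1 →
      empLoss a σ f x y (α • w₁ + (1 - α) • w₂)
        ≤ (1 - 1 / lam)⁻¹ * max (empLoss a σ f x y w₁) (empLoss a σ f x y w₂) := by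
  intro α hα
  have hlam₀ : 0 < lam := zero_lt_one.trans hlam
  have hκ : L * R ^ 2 * ‖w₁ - w₂‖ ^ 2 / (2 * √m) ≤ 1 / lam :=
    calc _ = lam * (L * R ^ 2 / 2) * ‖w₁ - w₂‖ ^ 2 / √m / lam := by field_simp
      _ ≤ 1 / lam := by gcongr; exact div_le_one_of_le₀ hm (Real.sqrt_nonneg _)
  have hE : 0 ≤ empLoss a σ f x y (α • w₁ + (1 - α) • w₂) :=
    mul_nonneg (by positivity) (Finset.sum_nonneg fun i _ ↦ hfnonneg _)
  rw [le_inv_mul_iff₀ (by rwa [sub_pos, div_lt_one hlam₀])]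
  refine (mul_le_mul_of_nonneg_right (by linarith) hE).trans
    (one_sub_mul_empLoss_le_max (fun j ↦ ?_) hσ hσ'' hf hfconv hfnonneg hfself hx (fun i ↦ ?_)
      w₁ w₂ hα)
  · rcases ha j with h | h <;> simp [h]
  · rcases hy i with h | h <;> simp [h]

/-- generalized local quasi-convexity of sufficiently wide neural nets. -/
theorem GLQC_of_wide_neural_nets
    {m d n : ℕ} (ℓ L R : ℝ)
    (a : Fin m → ℝ) (ha : ∀ j, a j = 1 ∨ a j = -1)
    (σ : ℝ → ℝ) (hσ : ContDiff ℝ 2 σ)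
    (hσ' : ∀ u, |deriv σ u| ≤ ℓ) (hσ'' : ∀ u, |deriv (deriv σ) u| ≤ L)
    (f : ℝ → ℝ) (hf : ContDiff ℝ 2 f) (hfconv : ConvexOn ℝ Set.univ f)
    (hfnonneg : ∀ u, 0 ≤ f u) (hfself : ∀ u, |deriv f u| ≤ f u)
    (x : Fin n → EuclideanSpace ℝ (Fin d)) (y : Fin n → ℝ)
    (hx : ∀ i, ‖x i‖ ≤ R) (hy : ∀ i, y i = 1 ∨ y i = -1)
    (w₁ w₂ : EuclideanSpace ℝ (Fin m × Fin d))
    (lam : ℝ) (hlam : 1 < lam)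
    (hm : lam * (L * R ^ 2 / 2) * ‖w₁ - w₂‖ ^ 2 ≤ Real.sqrt m) :
    ∀ α : ℝ, α ∈ Set.Icc (0 : ℝ) 1 →
      empLoss a σ f x y (α • w₁ + (1 - α) • w₂)
        ≤ (1 - 1 / lam)⁻¹ * max (empLoss a σ f x y w₁) (empLoss a σ f x y w₂) :=
  GLQC_of_wide_neural_nets_general L R a ha σ hσ hσ'' f hf hfconv hfnonneg hfself x y hx hy w₁ w₂
    lam hlam hm
end

section
/- (Expansiveness for self-bounded losses.) Suppose the loss is 1-smooth (f''(u) ≤ 1) and self-bounded (|f'(u)| ≤ f(u)). Then for any step size η ≤ 1/(ℓ²R²) and any w, w' ∈ ℝ^{md}, writing w_α := αw + (1−α)w', ‖(w − η∇F̂(w)) − (w' − η∇F̂(w'))‖ ≤ (1 + η·(LR²/√m)·max_{α∈[0,1]} F̂(w_α))·‖w − w'‖. -/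
open scoped BigOperators

/-!
The GD map `w ↦ w - η ∇F̂(w)` has derivative `I - η ∇²F̂(w)`, and with the margins
`zₛ(w) = yₛ Φ(w, xₛ)` the Hessian splits as
`∇²F̂ = (1/n) ∑ₛ f''(zₛ) ∇zₛ ∇zₛᵀ + (1/n) ∑ₛ f'(zₛ) ∇²zₛ`.
The first (Gauss–Newton) term `P` is positive semidefinite and `‖P‖ ≤ ℓ²R²` because
`0 ≤ f'' ≤ 1` and `‖∇zₛ‖ ≤ ℓR`, so `I - ηP` is nonexpansive for `η ≤ 1/(ℓ²R²)`.
The Hessian `∇²Φ` is block diagonal with blocks `aⱼ σ''(⟨wⱼ, x⟩) x xᵀ / √m`, so it has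
norm at most `LR²/√m`, and self-boundedness `|f'| ≤ f` bounds the second term by
`LR²/√m · F̂(w)`. Integrating the derivative of the GD map along the segment from `w'` to `w`
gives the claim with `F̂` at the worst point of the segment.
-/

open Finset Set
open scoped RealInnerProductSpace

theorem one_div_mul_mul_le (c : ℝ) {K : ℝ} (hK : 0 ≤ K) : 1 / c * (c * K) ≤ K := by
  rw [← mul_assoc, one_div_mul_eq_div]
  exact mul_le_of_le_one_left hK (div_self_le_one c)

section InnerProductSpace

variable {E : Type*} [NormedAddCommGroup E] [InnerProductSpace ℝ E]

theorem norm_sub_smul_sum_inner_smul_le {ι : Type*} [Fintype ι] (c : ι → ℝ) (g : ι → E) (u : E)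
    {η : ℝ} (hc : ∀ i, 0 ≤ c i) (hη : 0 ≤ η) (hηc : η * ∑ i, c i * ‖g i‖ ^ 2 ≤ 1) :
    ‖u - η • ∑ i, (c i * ⟪g i, u⟫) • g i‖ ≤ ‖u‖ := by
  set P := ∑ i, (c i * ⟪g i, u⟫) • g i
  set T := ∑ i, c i * ⟪g i, u⟫ ^ 2
  have hT : 0 ≤ T := sum_nonneg fun i _ => mul_nonneg (hc i) (sq_nonneg _)
  have hinner : ⟪u, P⟫ = T := by
    simp only [P, T, inner_sum, real_inner_smul_right, real_inner_comm u]
    exact sum_congr rfl fun i _ => by ring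
  have hnorm : ‖P‖ ≤ ∑ i, c i * |⟪g i, u⟫| * ‖g i‖ :=
    (norm_sum_le _ _).trans_eq <| sum_congr rfl fun i _ => by
      rw [norm_smul, Real.norm_eq_abs, abs_mul, abs_of_nonneg (hc i)]
  -- Cauchy–Schwarz with weights `c i` gives `‖P‖² ≤ K ⟪u, P⟫` for `K = ∑ cᵢ ‖gᵢ‖²`, hence
  -- `‖u - ηP‖² = ‖u‖² - 2η ⟪u, P⟫ + η² ‖P‖² ≤ ‖u‖² - η (2 - ηK) ⟪u, P⟫`.
  have hP : ‖P‖ ^ 2 ≤ (∑ i, c i * ‖g i‖ ^ 2) * T :=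
    (pow_le_pow_left₀ (norm_nonneg _) hnorm 2).trans <|
      sum_sq_le_sum_mul_sum_of_sq_le_mul _ (fun i _ => mul_nonneg (hc i) (sq_nonneg _))
        (fun i _ => mul_nonneg (hc i) (sq_nonneg _)) fun i _ =>
          le_of_eq <| by rw [← sq_abs ⟪g i, u⟫]; ring
  have hsq : ‖u - η • P‖ ^ 2 ≤ ‖u‖ ^ 2 := by
    rw [norm_sub_sq_real, real_inner_smul_right, hinner, norm_smul, Real.norm_eq_abs,
      abs_of_nonneg hη]
    nlinarith [mul_le_mul_of_nonneg_left hP (sq_nonneg η),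
      mul_le_mul_of_nonneg_right hηc (mul_nonneg hη hT)]
  exact (pow_le_pow_iff_left₀ (norm_nonneg _) (norm_nonneg _) two_ne_zero).mp hsq

theorem HasGradientAt.hasDerivAt_add_smul [CompleteSpace E] {φ : E → ℝ} {g w u : E} {t : ℝ}
    (h : HasGradientAt φ g (w + t • u)) : HasDerivAt (fun s : ℝ => φ (w + s • u)) ⟪g, u⟫ t := by
  have hline : HasDerivAt (fun s : ℝ => w + s • u) u t := by
    simpa using ((hasDerivAt_id t).smul_const u).const_add w
  exact (hasGradientAt_iff_hasFDerivAt.mp h).comp_hasDerivAt t hline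

end InnerProductSpace

theorem norm_sub_smul_sub_le_of_hasDerivAt_segment {E : Type*} [NormedAddCommGroup E]
    [NormedSpace ℝ E] {g : E → E} {g' : ℝ → E} {w w' : E} {η C : ℝ}
    (hg : ∀ t, HasDerivAt (fun t => g (w' + t • (w - w'))) (g' t) t)
    (hC : ∀ t ∈ Icc (0 : ℝ) 1, ‖(w - w') - η • g' t‖ ≤ C) :
    ‖(w - η • g w) - (w' - η • g w')‖ ≤ C := by
  have hline (t : ℝ) : HasDerivAt (fun t : ℝ => w' + t • (w - w')) (w - w') t := by
    simpa using ((hasDerivAt_id t).smul_const (w - w')).const_add w'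
  have := norm_image_sub_le_of_norm_deriv_le_segment_01'
    (f := fun t => (w' + t • (w - w')) - η • g (w' + t • (w - w')))
    (fun t _ => ((hline t).sub ((hg t).const_smul η)).hasDerivWithinAt)
    (fun t ht => hC t (Ico_subset_Icc_self ht))
  simpa using this

theorem le_iSup_Icc_of_continuous {E : Type*} [TopologicalSpace E] [AddCommGroup E] [Module ℝ E]
    [ContinuousAdd E] [ContinuousSMul ℝ E] {φ : E → ℝ} (hφ : Continuous φ) (w w' : E) {t : ℝ}
    (ht : t ∈ Icc (0 : ℝ) 1) :
    φ (w' + t • (w - w')) ≤ ⨆ α : Icc (0 : ℝ) 1, φ ((α : ℝ) • w + (1 - (α : ℝ)) • w') := by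
  have hbdd := (isCompact_range (f := fun α : Icc (0 : ℝ) 1 =>
    φ ((α : ℝ) • w + (1 - (α : ℝ)) • w')) (by fun_prop)).bddAbove
  refine (le_of_eq ?_).trans (le_ciSup hbdd ⟨t, ht⟩)
  congr 1
  module

section Blocks

variable {m d : ℕ}

-- `block u j` is the weight vector `u_j` of neuron `j`; `blockVec j v` is `v` placed in block `j`.
def blockVec (j : Fin m) (v : EuclideanSpace ℝ (Fin d)) : EuclideanSpace ℝ (Fin m × Fin d) :=
  WithLp.toLp 2 fun p => if p.1 = j then v p.2 else 0

def block (u : EuclideanSpace ℝ (Fin m × Fin d)) (j : Fin m) : EuclideanSpace ℝ (Fin d) :=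
  WithLp.toLp 2 fun i => u (j, i)

theorem inner_blockVec (j : Fin m) (v : EuclideanSpace ℝ (Fin d))
    (u : EuclideanSpace ℝ (Fin m × Fin d)) : ⟪blockVec j v, u⟫ = ⟪v, block u j⟫ := by
  simp [blockVec, block, PiLp.inner_apply, Fintype.sum_prod_type]

theorem sum_norm_block_sq (u : EuclideanSpace ℝ (Fin m × Fin d)) :
    ∑ j, ‖block u j‖ ^ 2 = ‖u‖ ^ 2 := by
  simp [EuclideanSpace.norm_sq_eq, block, Fintype.sum_prod_type]

theorem block_sum_smul_blockVec (c : Fin m → ℝ) (v : EuclideanSpace ℝ (Fin d)) (k : Fin m) :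
    block (∑ j, c j • blockVec j v) k = c k • v := by
  ext i
  simp [block, blockVec]

theorem norm_sum_smul_blockVec_sq (c : Fin m → ℝ) (v : EuclideanSpace ℝ (Fin d)) :
    ‖∑ j, c j • blockVec j v‖ ^ 2 = (∑ j, c j ^ 2) * ‖v‖ ^ 2 := by
  simp [← sum_norm_block_sq, block_sum_smul_blockVec, norm_smul, mul_pow, sum_mul]

end Blocks

section TwoLayer

variable {m d : ℕ} (a : Fin m → ℝ) (σ : ℝ → ℝ)

theorem Phi_eq_sum_inner_blockVec (w : EuclideanSpace ℝ (Fin m × Fin d))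
    (x : EuclideanSpace ℝ (Fin d)) :
    Phi a σ w x = 1 / √m * ∑ j, a j * σ ⟪blockVec j x, w⟫ := by
  simp only [Phi, inner_blockVec]
  congr!

noncomputable def gradPhi (w : EuclideanSpace ℝ (Fin m × Fin d)) (x : EuclideanSpace ℝ (Fin d)) :
    EuclideanSpace ℝ (Fin m × Fin d) :=
  (1 / √m) • ∑ j, (a j * deriv σ ⟪blockVec j x, w⟫) • blockVec j x

noncomputable def hessPhi (w : EuclideanSpace ℝ (Fin m × Fin d)) (x : EuclideanSpace ℝ (Fin d))
    (u : EuclideanSpace ℝ (Fin m × Fin d)) : EuclideanSpace ℝ (Fin m × Fin d) :=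
  (1 / √m) • ∑ j, (a j * deriv (deriv σ) ⟪blockVec j x, w⟫ * ⟪blockVec j x, u⟫) • blockVec j x

variable {a σ}

theorem hasGradientAt_Phi (hσ : Differentiable ℝ σ) (w : EuclideanSpace ℝ (Fin m × Fin d))
    (x : EuclideanSpace ℝ (Fin d)) : HasGradientAt (fun w => Phi a σ w x) (gradPhi a σ w x) w := by
  rw [hasGradientAt_iff_hasFDerivAt]
  have hneuron (j : Fin m) : HasFDerivAt (fun w => a j * σ ⟪blockVec j x, w⟫)
      ((a j * deriv σ ⟪blockVec j x, w⟫) • innerSL ℝ (blockVec j x)) w := by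
    simpa [mul_smul] using
      (((hσ _).hasDerivAt.comp_hasFDerivAt w (innerSL ℝ (blockVec j x)).hasFDerivAt).const_mul
        (a j))
  simp_rw [Phi_eq_sum_inner_blockVec]
  refine ((HasFDerivAt.fun_sum fun j _ => hneuron j).const_mul (1 / √m)).congr_fderiv ?_
  ext v
  simp [gradPhi, mul_sum]

theorem hasDerivAt_gradPhi_add_smul (hσ : Differentiable ℝ (deriv σ))
    (w u : EuclideanSpace ℝ (Fin m × Fin d)) (x : EuclideanSpace ℝ (Fin d)) (t : ℝ) :
    HasDerivAt (fun t => gradPhi a σ (w + t • u) x) (hessPhi a σ (w + t • u) x u) t := by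
  have hneuron (j : Fin m) : HasDerivAt (fun t => a j * deriv σ ⟪blockVec j x, w + t • u⟫)
      (a j * deriv (deriv σ) ⟪blockVec j x, w + t • u⟫ * ⟪blockVec j x, u⟫) t := by
    have hpre : HasDerivAt (fun t : ℝ => ⟪blockVec j x, w + t • u⟫) ⟪blockVec j x, u⟫ t := by
      simpa [inner_add_right, real_inner_smul_right] using
        ((hasDerivAt_id t).mul_const ⟪blockVec j x, u⟫).const_add ⟪blockVec j x, w⟫
    simpa [mul_assoc] using ((hσ _).hasDerivAt.comp t hpre).const_mul (a j)
  exact (HasDerivAt.fun_sum fun j _ => (hneuron j).smul_const (blockVec j x)).const_smul (1 / √m)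

theorem norm_gradPhi_sq_le {ℓ : ℝ} (ha : ∀ j, |a j| ≤ 1) (hσ' : ∀ u, |deriv σ u| ≤ ℓ)
    (w : EuclideanSpace ℝ (Fin m × Fin d)) (x : EuclideanSpace ℝ (Fin d)) :
    ‖gradPhi a σ w x‖ ^ 2 ≤ ℓ ^ 2 * ‖x‖ ^ 2 := by
  have hcoef : ∑ j, (a j * deriv σ ⟪blockVec j x, w⟫) ^ 2 ≤ m * ℓ ^ 2 := by
    refine (sum_le_card_nsmul univ _ (ℓ ^ 2) fun j _ => ?_).trans_eq (by simp)
    rw [← sq_abs, abs_mul]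
    refine pow_le_pow_left₀ (by positivity) ?_ 2
    simpa using mul_le_mul (ha j) (hσ' _) (abs_nonneg _) zero_le_one
  rw [gradPhi, norm_smul, mul_pow, norm_sum_smul_blockVec_sq, Real.norm_eq_abs, sq_abs,
    one_div_pow, Real.sq_sqrt m.cast_nonneg, ← mul_assoc]
  gcongr
  exact (mul_le_mul_of_nonneg_left hcoef (by positivity)).trans
    (one_div_mul_mul_le _ (sq_nonneg ℓ))

theorem norm_hessPhi_le {L : ℝ} (ha : ∀ j, |a j| ≤ 1) (hσ'' : ∀ u, |deriv (deriv σ) u| ≤ L)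
    (w : EuclideanSpace ℝ (Fin m × Fin d)) (x : EuclideanSpace ℝ (Fin d))
    (u : EuclideanSpace ℝ (Fin m × Fin d)) :
    ‖hessPhi a σ w x u‖ ≤ L * ‖x‖ ^ 2 / √m * ‖u‖ := by
  have hL : 0 ≤ L := (abs_nonneg _).trans (hσ'' 0)
  have hcoef : ∑ j, (a j * deriv (deriv σ) ⟪blockVec j x, w⟫ * ⟪blockVec j x, u⟫) ^ 2
      ≤ (L * ‖x‖ * ‖u‖) ^ 2 := by
    rw [mul_pow _ ‖u‖, ← sum_norm_block_sq, mul_sum]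
    refine sum_le_sum fun j _ => ?_
    rw [← sq_abs, ← mul_pow, abs_mul, abs_mul, inner_blockVec j x u, mul_assoc _ ‖x‖]
    refine pow_le_pow_left₀ (by positivity) ?_ 2
    refine mul_le_mul ?_ (abs_real_inner_le_norm _ _) (abs_nonneg _) hL
    simpa using mul_le_mul (ha j) (hσ'' _) (abs_nonneg _) zero_le_one
  have hsum : ‖∑ j, (a j * deriv (deriv σ) ⟪blockVec j x, w⟫ * ⟪blockVec j x, u⟫) • blockVec j x‖
      ≤ L * ‖x‖ ^ 2 * ‖u‖ := by
    refine (pow_le_pow_iff_left₀ (norm_nonneg _) (by positivity) two_ne_zero).mp ?_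
    rw [norm_sum_smul_blockVec_sq]
    calc _ ≤ (L * ‖x‖ * ‖u‖) ^ 2 * ‖x‖ ^ 2 := by gcongr
      _ = (L * ‖x‖ ^ 2 * ‖u‖) ^ 2 := by ring
  rw [hessPhi, norm_smul, Real.norm_eq_abs, abs_of_nonneg (by positivity)]
  calc _ ≤ 1 / √m * (L * ‖x‖ ^ 2 * ‖u‖) := by gcongr
    _ = L * ‖x‖ ^ 2 / √m * ‖u‖ := by ring

end TwoLayer

section EmpiricalLoss

variable {m d n : ℕ} (a : Fin m → ℝ) (σ f : ℝ → ℝ) (x : Fin n → EuclideanSpace ℝ (Fin d))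
  (y : Fin n → ℝ)

noncomputable def gradEmpLoss (w : EuclideanSpace ℝ (Fin m × Fin d)) :
    EuclideanSpace ℝ (Fin m × Fin d) :=
  ∑ s, (1 / (n : ℝ) * deriv f (y s * Phi a σ w (x s)) * y s) • gradPhi a σ w (x s)

noncomputable def gaussNewtonEmpLoss (w u : EuclideanSpace ℝ (Fin m × Fin d)) :
    EuclideanSpace ℝ (Fin m × Fin d) :=
  ∑ s, (1 / (n : ℝ) * deriv (deriv f) (y s * Phi a σ w (x s)) * y s ^ 2
      * ⟪gradPhi a σ w (x s), u⟫) • gradPhi a σ w (x s)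

noncomputable def curvatureEmpLoss (w u : EuclideanSpace ℝ (Fin m × Fin d)) :
    EuclideanSpace ℝ (Fin m × Fin d) :=
  ∑ s, (1 / (n : ℝ) * deriv f (y s * Phi a σ w (x s)) * y s) • hessPhi a σ w (x s) u

noncomputable def hessEmpLoss (w u : EuclideanSpace ℝ (Fin m × Fin d)) :
    EuclideanSpace ℝ (Fin m × Fin d) :=
  gaussNewtonEmpLoss a σ f x y w u + curvatureEmpLoss a σ f x y w u

variable {a σ f x y}

theorem hasGradientAt_empLoss (hσ : Differentiable ℝ σ) (hf : Differentiable ℝ f)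
    (w : EuclideanSpace ℝ (Fin m × Fin d)) :
    HasGradientAt (empLoss a σ f x y) (gradEmpLoss a σ f x y w) w := by
  rw [hasGradientAt_iff_hasFDerivAt]
  have hsample (s : Fin n) : HasFDerivAt (fun w => f (y s * Phi a σ w (x s)))
      ((deriv f (y s * Phi a σ w (x s)) * y s) • innerSL ℝ (gradPhi a σ w (x s))) w := by
    have := (hasGradientAt_iff_hasFDerivAt.mp (hasGradientAt_Phi (a := a) hσ w (x s))).const_mul
      (y s)
    exact ((hf _).hasDerivAt.comp_hasFDerivAt w this).congr_fderiv (by ext; simp [mul_smul])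
  refine ((HasFDerivAt.fun_sum fun s _ => hsample s).const_mul (1 / (n : ℝ))).congr_fderiv ?_
  ext v
  simp [gradEmpLoss, mul_sum, mul_assoc]

theorem hasDerivAt_gradEmpLoss_add_smul (hσ : Differentiable ℝ σ)
    (hσ' : Differentiable ℝ (deriv σ)) (hf' : Differentiable ℝ (deriv f))
    (w u : EuclideanSpace ℝ (Fin m × Fin d)) (t : ℝ) :
    HasDerivAt (fun t => gradEmpLoss a σ f x y (w + t • u))
      (hessEmpLoss a σ f x y (w + t • u) u) t := by
  have hsample (s : Fin n) : HasDerivAt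
      (fun t => (1 / (n : ℝ) * deriv f (y s * Phi a σ (w + t • u) (x s)) * y s)
        • gradPhi a σ (w + t • u) (x s))
      ((1 / (n : ℝ) * deriv (deriv f) (y s * Phi a σ (w + t • u) (x s)) * y s ^ 2
          * ⟪gradPhi a σ (w + t • u) (x s), u⟫) • gradPhi a σ (w + t • u) (x s)
        + (1 / (n : ℝ) * deriv f (y s * Phi a σ (w + t • u) (x s)) * y s)
          • hessPhi a σ (w + t • u) (x s) u) t := by
    have hmargin :=
      (hasGradientAt_Phi (a := a) hσ (w + t • u) (x s)).hasDerivAt_add_smul.const_mul (y s)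
    have hcoef := (((hf' _).hasDerivAt.comp t hmargin).const_mul (1 / (n : ℝ))).mul_const (y s)
    refine (hcoef.smul (hasDerivAt_gradPhi_add_smul hσ' w u (x s) t)).congr_deriv ?_
    rw [add_comm]
    congr 2
    ring
  rw [hessEmpLoss, gaussNewtonEmpLoss, curvatureEmpLoss, ← sum_add_distrib]
  exact HasDerivAt.fun_sum fun s _ => hsample s


theorem norm_sub_smul_gaussNewtonEmpLoss_le {ℓ R η : ℝ} (ha : ∀ j, |a j| ≤ 1)
    (hσ' : ∀ u, |deriv σ u| ≤ ℓ) (hf''_nonneg : ∀ u, 0 ≤ deriv (deriv f) u)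
    (hf''_le : ∀ u, deriv (deriv f) u ≤ 1) (hx : ∀ s, ‖x s‖ ≤ R) (hy : ∀ s, |y s| ≤ 1)
    (hη : 0 ≤ η) (hηℓR : η * (ℓ ^ 2 * R ^ 2) ≤ 1) (w u : EuclideanSpace ℝ (Fin m × Fin d)) :
    ‖u - η • gaussNewtonEmpLoss a σ f x y w u‖ ≤ ‖u‖ := by
  set z := fun s => y s * Phi a σ w (x s)
  set g := fun s => gradPhi a σ w (x s)
  refine norm_sub_smul_sum_inner_smul_le _ _ u (fun s => by positivity [hf''_nonneg (z s)]) hη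
    ((mul_le_mul_of_nonneg_left ?_ hη).trans hηℓR)
  calc ∑ s, 1 / (n : ℝ) * deriv (deriv f) (z s) * y s ^ 2 * ‖g s‖ ^ 2
      ≤ ∑ s : Fin n, 1 / (n : ℝ) * (ℓ ^ 2 * R ^ 2) := sum_le_sum fun s _ => by
        have hcoef : deriv (deriv f) (z s) * y s ^ 2 ≤ 1 :=
          mul_le_one₀ (hf''_le _) (sq_nonneg _) ((sq_le_one_iff_abs_le_one _).mpr (hy s))
        have hg : ‖g s‖ ^ 2 ≤ ℓ ^ 2 * R ^ 2 :=
          (norm_gradPhi_sq_le ha hσ' w (x s)).trans (by gcongr; exact hx s)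
        rw [mul_assoc _ _ (y s ^ 2), mul_assoc]
        exact mul_le_mul_of_nonneg_left
          (by simpa using mul_le_mul hcoef hg (sq_nonneg _) zero_le_one) (by positivity)
    _ ≤ ℓ ^ 2 * R ^ 2 := by
      simpa [mul_left_comm] using one_div_mul_mul_le (n : ℝ) (by positivity : 0 ≤ ℓ ^ 2 * R ^ 2)

theorem norm_curvatureEmpLoss_le {L R : ℝ} (ha : ∀ j, |a j| ≤ 1)
    (hσ'' : ∀ u, |deriv (deriv σ) u| ≤ L) (hfself : ∀ u, |deriv f u| ≤ f u)
    (hx : ∀ s, ‖x s‖ ≤ R) (hy : ∀ s, |y s| ≤ 1) (w u : EuclideanSpace ℝ (Fin m × Fin d)) :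
    ‖curvatureEmpLoss a σ f x y w u‖ ≤ L * R ^ 2 / √m * empLoss a σ f x y w * ‖u‖ := by
  have hL : 0 ≤ L := (abs_nonneg _).trans (hσ'' 0)
  set z := fun s => y s * Phi a σ w (x s)
  calc _ ≤ ∑ s, 1 / (n : ℝ) * f (z s) * (L * R ^ 2 / √m * ‖u‖) :=
        (norm_sum_le _ _).trans <| sum_le_sum fun s _ => by
          rw [norm_smul, Real.norm_eq_abs, abs_mul, abs_mul, abs_of_nonneg (by positivity)]
          refine mul_le_mul ?_ ((norm_hessPhi_le ha hσ'' w (x s) u).trans ?_) (norm_nonneg _)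
            (by positivity [(abs_nonneg _).trans (hfself (z s))])
          · rw [mul_assoc]
            gcongr
            simpa using mul_le_mul (hfself (z s)) (hy s) (abs_nonneg _)
              ((abs_nonneg _).trans (hfself _))
          · gcongr
            exact hx s
    _ = L * R ^ 2 / √m * empLoss a σ f x y w * ‖u‖ := by
      rw [empLoss, ← sum_mul, ← mul_sum]
      ring

theorem norm_sub_smul_hessEmpLoss_le {ℓ L R η : ℝ} (ha : ∀ j, |a j| ≤ 1)
    (hσ' : ∀ u, |deriv σ u| ≤ ℓ) (hσ'' : ∀ u, |deriv (deriv σ) u| ≤ L)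
    (hf''_nonneg : ∀ u, 0 ≤ deriv (deriv f) u) (hf''_le : ∀ u, deriv (deriv f) u ≤ 1)
    (hfself : ∀ u, |deriv f u| ≤ f u) (hx : ∀ s, ‖x s‖ ≤ R) (hy : ∀ s, |y s| ≤ 1)
    (hη : 0 ≤ η) (hηℓR : η * (ℓ ^ 2 * R ^ 2) ≤ 1) (w u : EuclideanSpace ℝ (Fin m × Fin d)) :
    ‖u - η • hessEmpLoss a σ f x y w u‖
      ≤ (1 + η * (L * R ^ 2 / √m) * empLoss a σ f x y w) * ‖u‖ := by
  calc ‖u - η • hessEmpLoss a σ f x y w u‖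
      = ‖(u - η • gaussNewtonEmpLoss a σ f x y w u) - η • curvatureEmpLoss a σ f x y w u‖ := by
        rw [hessEmpLoss, smul_add, sub_add_eq_sub_sub]
    _ ≤ ‖u‖ + η * (L * R ^ 2 / √m * empLoss a σ f x y w * ‖u‖) := by
        refine (norm_sub_le _ _).trans ?_
        rw [norm_smul, Real.norm_eq_abs, abs_of_nonneg hη]
        gcongr
        · exact norm_sub_smul_gaussNewtonEmpLoss_le ha hσ' hf''_nonneg hf''_le hx hy hη hηℓR w u
        · exact norm_curvatureEmpLoss_le ha hσ'' hfself hx hy w u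
    _ = (1 + η * (L * R ^ 2 / √m) * empLoss a σ f x y w) * ‖u‖ := by ring

end EmpiricalLoss

theorem GD_expansiveness_self_bounded_general
    {m d n : ℕ} (ℓ L R η : ℝ)
    (a : Fin m → ℝ) (ha : ∀ j, a j = 1 ∨ a j = -1)
    (σ : ℝ → ℝ) (hσ : ContDiff ℝ 2 σ)
    (hσ' : ∀ u, |deriv σ u| ≤ ℓ) (hσ'' : ∀ u, |deriv (deriv σ) u| ≤ L)
    (f : ℝ → ℝ) (hf : ContDiff ℝ 2 f) (hfconv : ConvexOn ℝ Set.univ f)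
    (hfsmooth : ∀ u, deriv (deriv f) u ≤ 1) (hfself : ∀ u, |deriv f u| ≤ f u)
    (x : Fin n → EuclideanSpace ℝ (Fin d)) (y : Fin n → ℝ)
    (hx : ∀ i, ‖x i‖ ≤ R) (hy : ∀ i, y i = 1 ∨ y i = -1)
    (hη : 0 < η) (hηle : η ≤ 1 / (ℓ ^ 2 * R ^ 2))
    (w w' : EuclideanSpace ℝ (Fin m × Fin d)) :
    ‖(w - η • gradient (empLoss a σ f x y) w)
        - (w' - η • gradient (empLoss a σ f x y) w')‖
      ≤ (1 + η * (L * R ^ 2 / Real.sqrt m)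
            * ⨆ α : Set.Icc (0 : ℝ) 1,
                empLoss a σ f x y ((α : ℝ) • w + (1 - (α : ℝ)) • w'))
        * ‖w - w'‖ := by
  have hσ₁ : Differentiable ℝ σ := hσ.differentiable two_ne_zero
  have hf₁ : Differentiable ℝ f := hf.differentiable two_ne_zero
  have hgrad := hasGradientAt_empLoss (a := a) (x := x) (y := y) hσ₁ hf₁
  have hF : Continuous (empLoss a σ f x y) :=
    continuous_iff_continuousAt.mpr fun v => (hgrad v).continuousAt
  have ha₁ (j : Fin m) : |a j| ≤ 1 := by rcases ha j with h | h <;> simp [h]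
  have hy₁ (s : Fin n) : |y s| ≤ 1 := by rcases hy s with h | h <;> simp [h]
  have hf''_nonneg (u : ℝ) : 0 ≤ deriv (deriv f) u :=
    (monotoneOn_univ.mp (hfconv.monotoneOn_deriv fun u _ => hf₁ u)).deriv_nonneg
  have hηℓR : η * (ℓ ^ 2 * R ^ 2) ≤ 1 := by
    rcases (by positivity : (0 : ℝ) ≤ ℓ ^ 2 * R ^ 2).eq_or_lt with h | h
    · simp [← h]
    · exact (le_div_iff₀ h).mp hηle
  have hL : 0 ≤ L := (abs_nonneg _).trans (hσ'' 0)
  rw [(hgrad w).gradient, (hgrad w').gradient]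
  refine norm_sub_smul_sub_le_of_hasDerivAt_segment (hasDerivAt_gradEmpLoss_add_smul hσ₁
    hσ.differentiable_deriv_two hf.differentiable_deriv_two w' (w - w')) fun t ht => ?_
  calc _ ≤ (1 + η * (L * R ^ 2 / √m) * empLoss a σ f x y (w' + t • (w - w'))) * ‖w - w'‖ :=
        norm_sub_smul_hessEmpLoss_le ha₁ hσ' hσ'' hf''_nonneg hfsmooth hfself hx hy₁ hη.le hηℓR _ _
    _ ≤ _ := by
        gcongr
        exact le_iSup_Icc_of_continuous hF w w' ht

/-- expansiveness of the GD map for self-bounded losses. -/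
theorem GD_expansiveness_self_bounded
    {m d n : ℕ} (ℓ L R η : ℝ)
    (a : Fin m → ℝ) (ha : ∀ j, a j = 1 ∨ a j = -1)
    (σ : ℝ → ℝ) (hσ : ContDiff ℝ 2 σ)
    (hσ' : ∀ u, |deriv σ u| ≤ ℓ) (hσ'' : ∀ u, |deriv (deriv σ) u| ≤ L)
    (f : ℝ → ℝ) (hf : ContDiff ℝ 2 f) (hfconv : ConvexOn ℝ Set.univ f)
    (hfnonneg : ∀ u, 0 ≤ f u)
    (hfsmooth : ∀ u, deriv (deriv f) u ≤ 1) (hfself : ∀ u, |deriv f u| ≤ f u)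
    (x : Fin n → EuclideanSpace ℝ (Fin d)) (y : Fin n → ℝ)
    (hx : ∀ i, ‖x i‖ ≤ R) (hy : ∀ i, y i = 1 ∨ y i = -1)
    (hη : 0 < η) (hηle : η ≤ 1 / (ℓ ^ 2 * R ^ 2))
    (w w' : EuclideanSpace ℝ (Fin m × Fin d)) :
    ‖(w - η • gradient (empLoss a σ f x y) w)
        - (w' - η • gradient (empLoss a σ f x y) w')‖
      ≤ (1 + η * (L * R ^ 2 / Real.sqrt m)
            * ⨆ α : Set.Icc (0 : ℝ) 1,
                empLoss a σ f x y ((α : ℝ) • w + (1 - (α : ℝ)) • w'))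
        * ‖w - w'‖ :=
  GD_expansiveness_self_bounded_general ℓ L R η a ha σ hσ hσ' hσ'' f hf hfconv hfsmooth hfself x y
    hx hy hη hηle w w'
end

section
/- (Descent lemma.) (i) If the loss satisfies the self-boundedness properties |f'(u)| ≤ f(u) and f''(u) ≤ f(u) for all u, then for any w ∈ ℝ^{md} and any step size η < (1/(R²·F̂(w)))·min{1/(ℓ² + L), 1/(√L·ℓ)}, the single gradient step w⁺ := w − η∇F̂(w) satisfies F̂(w⁺) ≤ F̂(w) − (η/2)·‖∇F̂(w)‖². (ii) If instead the loss is 1-Lipschitz (|f'| ≤ 1) and 1-smooth (f'' ≤ 1), then the same conclusion holds for any step size η ≤ 1/L_F̂, where L_F̂ := ℓ²R² + LR²/√m. -/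
/-!
Put `v = -η ∇F̂(w)` and `φ(t) = F̂(w + t v)`, so `φ'(0) = -η ‖∇F̂(w)‖²`. Each sample contributes
`f''(z) z'² + f'(z) z''` to `φ''`, where `z(t) = y Φ(w + t v, x)` satisfies
`z'² + |z''| ≤ (ℓ²R² + LR²/√m) ‖v‖²`: Cauchy–Schwarz over the neurons for `z'`, and the `1/√m`
scaling for `z''`. For a 1-Lipschitz, 1-smooth loss this bounds `φ''` by a constant and the
quadratic Taylor bound gives the descent. For a self-bounded loss it gives `φ'' ≤ s² φ`;
comparison with the solution of `c'' = s² c` yields `φ(1) ≤ φ(0) cosh s + φ'(0) sinh s / s`, and the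
step-size condition `φ(0) s² ≤ -φ'(0)` together with `cosh s - 1 ≤ s sinh s - s²/2` turns this
into `φ(1) ≤ φ(0) + φ'(0) / 2`.
-/

open scoped BigOperators

open Set Real

lemma nonpos_of_hasDerivAt_le_mul {h h' : ℝ → ℝ} {k : ℝ} (hd : ∀ t, HasDerivAt h (h' t) t)
    (h0 : h 0 ≤ 0) (hle : ∀ t ∈ Ico (0 : ℝ) 1, h' t ≤ k * h t) :
    ∀ t ∈ Icc (0 : ℝ) 1, h t ≤ 0 := by
  intro t ht
  simpa [gronwallBound_ε0_δ0] using le_gronwallBound_of_liminf_deriv_right_le (ε := 0)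
    (fun t _ => (hd t).continuousAt.continuousWithinAt)
    (fun t _ r hr => (hd t).hasDerivWithinAt.liminf_right_slope_le hr) h0
    (by simpa using hle) t ht

lemma nonpos_of_deriv2_le_sq_mul {g g' g'' : ℝ → ℝ} {s : ℝ}
    (hg : ∀ t, HasDerivAt g (g' t) t) (hg' : ∀ t, HasDerivAt g' (g'' t) t)
    (h0 : g 0 = 0) (h0' : g' 0 ≤ 0) (hle : ∀ t ∈ Icc (0 : ℝ) 1, g'' t ≤ s ^ 2 * g t) :
    ∀ t ∈ Icc (0 : ℝ) 1, g t ≤ 0 := by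
  -- factor `D² - s²` as `(D + s)(D - s)`: first `g' - s g ≤ 0`, then `g ≤ 0`
  have hslope : ∀ t ∈ Icc (0 : ℝ) 1, g' t - s * g t ≤ 0 :=
    nonpos_of_hasDerivAt_le_mul (k := -s) (fun t => (hg' t).sub ((hg t).const_mul s))
      (by simp [h0, h0']) fun t ht => by nlinarith [hle t (Ico_subset_Icc_self ht)]
  exact nonpos_of_hasDerivAt_le_mul (k := s) hg h0.le
    fun t ht => by linarith [hslope t (Ico_subset_Icc_self ht)]

lemma le_add_deriv_add_of_deriv2_le {φ φ' φ'' : ℝ → ℝ} {A : ℝ}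
    (hφ : ∀ t, HasDerivAt φ (φ' t) t) (hφ' : ∀ t, HasDerivAt φ' (φ'' t) t)
    (hle : ∀ t ∈ Icc (0 : ℝ) 1, φ'' t ≤ A) : φ 1 ≤ φ 0 + φ' 0 + A / 2 := by
  have hg : ∀ t, HasDerivAt (fun t => φ t - φ 0 - φ' 0 * t - A / 2 * t ^ 2)
      (φ' t - φ' 0 - A * t) t := fun t => by
    refine ((((hφ t).sub_const (φ 0)).fun_sub ((hasDerivAt_id t).const_mul (φ' 0))).fun_sub
      ((hasDerivAt_pow 2 t).const_mul (A / 2))).congr_deriv (by ring)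
  have hg' : ∀ t, HasDerivAt (fun t => φ' t - φ' 0 - A * t) (φ'' t - A) t := fun t => by
    simpa using ((hφ' t).sub_const (φ' 0)).fun_sub ((hasDerivAt_id t).const_mul A)
  have := nonpos_of_deriv2_le_sq_mul (s := 0) hg hg' (by simp) (by simp)
    (fun t ht => by simpa using hle t ht) 1 (right_mem_Icc.2 zero_le_one)
  linarith

lemma le_cosh_add_sinh_of_deriv2_le_sq_mul {φ φ' φ'' : ℝ → ℝ} {s : ℝ} (hs : 0 < s)
    (hφ : ∀ t, HasDerivAt φ (φ' t) t) (hφ' : ∀ t, HasDerivAt φ' (φ'' t) t)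
    (hle : ∀ t ∈ Icc (0 : ℝ) 1, φ'' t ≤ s ^ 2 * φ t) :
    φ 1 ≤ φ 0 * cosh s + φ' 0 * sinh s / s := by
  -- comparison with the solution `c` of `c'' = s² c` with the same initial data
  set c : ℝ → ℝ := fun t => φ 0 * cosh (s * t) + φ' 0 / s * sinh (s * t)
  set c' : ℝ → ℝ := fun t => φ 0 * s * sinh (s * t) + φ' 0 * cosh (s * t)
  have hst : ∀ t, HasDerivAt (fun t => s * t) s t := fun t => by
    simpa using (hasDerivAt_id t).const_mul s
  have hc : ∀ t, HasDerivAt c (c' t) t := fun t => by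
    refine ((((hst t).cosh).const_mul (φ 0)).fun_add
      (((hst t).sinh).const_mul (φ' 0 / s))).congr_deriv ?_
    simp only [c']
    field_simp
  have hc' : ∀ t, HasDerivAt c' (s ^ 2 * c t) t := fun t => by
    refine ((((hst t).sinh).const_mul (φ 0 * s)).fun_add
      (((hst t).cosh).const_mul (φ' 0))).congr_deriv ?_
    simp only [c]
    field_simp
  have := nonpos_of_deriv2_le_sq_mul (s := s) (fun t => (hφ t).fun_sub (hc t))
    (fun t => (hφ' t).fun_sub (hc' t)) (by simp [c]) (by simp [c'])
    (fun t ht => by linarith [hle t ht]) 1 (right_mem_Icc.2 zero_le_one)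
  simp only [c, mul_one] at this
  linarith [mul_div_assoc (φ' 0) (sinh s) s, mul_div_right_comm (φ' 0) (sinh s) s]

lemma cosh_sub_one_le_mul_sinh_sub_sq {s : ℝ} (hs : 0 ≤ s) :
    cosh s - 1 ≤ s * sinh s - s ^ 2 / 2 := by
  have hmono : MonotoneOn (fun s => s * sinh s - s ^ 2 / 2 - cosh s) (Ici 0) := by
    refine monotoneOn_of_hasDerivWithinAt_nonneg (f' := fun s => s * (cosh s - 1))
      (convex_Ici 0) (by fun_prop) (fun t _ => ?_) fun t ht => ?_
    · refine HasDerivAt.hasDerivWithinAt ?_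
      refine ((((hasDerivAt_id' t).mul (hasDerivAt_sinh t)).fun_sub
        ((hasDerivAt_pow 2 t).div_const 2)).fun_sub (hasDerivAt_cosh t)).congr_deriv
        (by ring)
    · rw [interior_Ici] at ht
      exact mul_nonneg (le_of_lt ht) (by linarith [one_le_cosh t])
  have := hmono self_mem_Ici hs hs
  dsimp only at this
  rw [sinh_zero, cosh_zero] at this
  linarith

lemma le_add_half_deriv_of_deriv2_le_mul {φ φ' φ'' : ℝ → ℝ} {K : ℝ}
    (hφ : ∀ t, HasDerivAt φ (φ' t) t) (hφ' : ∀ t, HasDerivAt φ' (φ'' t) t)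
    (hle : ∀ t ∈ Icc (0 : ℝ) 1, φ'' t ≤ K * φ t) (hK : 0 ≤ K) (h0 : 0 ≤ φ 0)
    (hslope : φ 0 * K ≤ -φ' 0) : φ 1 ≤ φ 0 + φ' 0 / 2 := by
  rcases hK.eq_or_lt with rfl | hK
  · have := le_add_deriv_add_of_deriv2_le hφ hφ' (A := 0) (by simpa using hle)
    linarith
  set s := √K
  have hs : 0 < s := sqrt_pos.2 hK
  have hsK : s ^ 2 = K := sq_sqrt hK.le
  have hcomp := le_cosh_add_sinh_of_deriv2_le_sq_mul hs hφ hφ' (by rwa [hsK])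
  have hsinh : 1 ≤ sinh s / s := (one_le_div hs).2 (self_le_sinh_iff.2 hs.le)
  calc φ 1 ≤ φ 0 * cosh s + φ' 0 * sinh s / s := hcomp
    _ ≤ φ 0 + φ 0 * (s * sinh s - s ^ 2 / 2) + φ' 0 * (sinh s / s) := by
      nlinarith [cosh_sub_one_le_mul_sinh_sub_sq hs.le, mul_div_assoc (φ' 0) (sinh s) s]
    _ = φ 0 + φ 0 * s ^ 2 * (sinh s / s - 1 / 2) + φ' 0 * (sinh s / s) := by
      field_simp
    _ ≤ φ 0 + -φ' 0 * (sinh s / s - 1 / 2) + φ' 0 * (sinh s / s) := by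
      gcongr
      · linarith
      · rwa [hsK]
    _ = φ 0 + φ' 0 / 2 := by ring

section GradientStep

variable {E : Type*} [NormedAddCommGroup E] [InnerProductSpace ℝ E] [CompleteSpace E]
  {F : E → ℝ} {w : E} {η β : ℝ} {ψ' ψ'' : ℝ → ℝ}

lemma hasDerivAt_gradient_step (hF : DifferentiableAt ℝ F w) (η : ℝ) :
    HasDerivAt (fun t : ℝ => F (w + t • -(η • gradient F w))) (-(η * ‖gradient F w‖ ^ 2)) 0 := by
  have := hF.hasGradientAt.hasFDerivAt.hasLineDerivAt (-(η • gradient F w))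
  rwa [InnerProductSpace.toDual_apply_apply, inner_neg_right, real_inner_smul_right,
    real_inner_self_eq_norm_sq] at this

lemma gradient_step_descent_of_deriv2_le (hF : DifferentiableAt ℝ F w) (hη : 0 ≤ η)
    (hηβ : η * β ≤ 1)
    (hψ' : ∀ t, HasDerivAt (fun t : ℝ => F (w + t • -(η • gradient F w))) (ψ' t) t)
    (hψ'' : ∀ t, HasDerivAt ψ' (ψ'' t) t)
    (hle : ∀ t ∈ Icc (0 : ℝ) 1, ψ'' t ≤ β * ‖η • gradient F w‖ ^ 2) :
    F (w - η • gradient F w) ≤ F w - η / 2 * ‖gradient F w‖ ^ 2 := by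
  have h := le_add_deriv_add_of_deriv2_le hψ' hψ'' hle
  simp only [zero_smul, add_zero, one_smul, ← sub_eq_add_neg, norm_smul, norm_of_nonneg hη,
    (hψ' 0).unique (hasDerivAt_gradient_step hF η)] at h
  nlinarith [mul_le_mul_of_nonneg_right hηβ (by positivity : 0 ≤ η * ‖gradient F w‖ ^ 2)]

lemma gradient_step_descent_of_deriv2_le_mul (hF : DifferentiableAt ℝ F w) (hη : 0 ≤ η)
    (hβ : 0 ≤ β) (hF₀ : 0 ≤ F w) (hηβ : η * (F w * β) ≤ 1)
    (hψ' : ∀ t, HasDerivAt (fun t : ℝ => F (w + t • -(η • gradient F w))) (ψ' t) t)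
    (hψ'' : ∀ t, HasDerivAt ψ' (ψ'' t) t)
    (hle : ∀ t ∈ Icc (0 : ℝ) 1,
      ψ'' t ≤ β * ‖η • gradient F w‖ ^ 2 * F (w + t • -(η • gradient F w))) :
    F (w - η • gradient F w) ≤ F w - η / 2 * ‖gradient F w‖ ^ 2 := by
  have hslope := (hψ' 0).unique (hasDerivAt_gradient_step hF η)
  have h := le_add_half_deriv_of_deriv2_le_mul hψ' hψ'' hle (by positivity) (by simpa using hF₀) ?_
  · simp only [zero_smul, add_zero, one_smul, ← sub_eq_add_neg, hslope] at h
    linarith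
  · simp only [zero_smul, add_zero, norm_smul, norm_of_nonneg hη, hslope]
    nlinarith [mul_le_mul_of_nonneg_right hηβ (by positivity : 0 ≤ η * ‖gradient F w‖ ^ 2)]

end GradientStep

section Network

variable {m d : ℕ}

/-- The paper's smoothness constant `L_F̂`. -/
noncomputable def smoothnessConst (ℓ L R : ℝ) (m : ℕ) : ℝ := ℓ ^ 2 * R ^ 2 + L * R ^ 2 / √m

lemma smoothnessConst_nonneg {ℓ L R : ℝ} (hL : 0 ≤ L) : 0 ≤ smoothnessConst ℓ L R m :=
  add_nonneg (by positivity) (div_nonneg (mul_nonneg hL (sq_nonneg R)) (sqrt_nonneg _))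

lemma smoothnessConst_le {ℓ L R : ℝ} (hL : 0 ≤ L) :
    smoothnessConst ℓ L R m ≤ R ^ 2 * (ℓ ^ 2 + L) := by
  have : L * R ^ 2 / √m ≤ L * R ^ 2 := by
    rcases Nat.eq_zero_or_pos m with rfl | hm
    · simp [mul_nonneg hL (sq_nonneg R)]
    · exact div_le_self (mul_nonneg hL (sq_nonneg R)) (one_le_sqrt.2 (by exact_mod_cast hm))
  rw [smoothnessConst]
  linarith

lemma mul_mul_smoothnessConst_le_one {η F ℓ L R c : ℝ} (hη : 0 ≤ η) (hF : 0 ≤ F)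
    (hL : 0 ≤ L) (h : η < 1 / (R ^ 2 * F) * min (1 / (ℓ ^ 2 + L)) c) :
    η * (F * smoothnessConst ℓ L R m) ≤ 1 := by
  have hD : 0 ≤ R ^ 2 * F * (ℓ ^ 2 + L) :=
    mul_nonneg (mul_nonneg (sq_nonneg R) hF) (add_nonneg (sq_nonneg ℓ) hL)
  calc η * (F * smoothnessConst ℓ L R m) ≤ η * (R ^ 2 * F * (ℓ ^ 2 + L)) := by
        rw [mul_comm (R ^ 2), mul_assoc F]
        gcongr
        exact smoothnessConst_le hL
    _ ≤ 1 := by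
        refine mul_le_of_le_div₀ zero_le_one hD (h.le.trans ?_)
        rw [← one_div_mul_one_div (R ^ 2 * F)]
        exact mul_le_mul_of_nonneg_left (min_le_left _ _)
          (one_div_nonneg.2 (mul_nonneg (sq_nonneg R) hF))

def preactivation (w : EuclideanSpace ℝ (Fin m × Fin d)) (x : EuclideanSpace ℝ (Fin d))
    (j : Fin m) : ℝ :=
  ∑ i : Fin d, w (j, i) * x i

lemma preactivation_add_smul (w v : EuclideanSpace ℝ (Fin m × Fin d))
    (x : EuclideanSpace ℝ (Fin d)) (t : ℝ) (j : Fin m) :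
    preactivation (w + t • v) x j = preactivation w x j + t * preactivation v x j := by
  simp [preactivation, add_mul, Finset.sum_add_distrib, Finset.mul_sum, mul_assoc]

lemma sum_sq_preactivation_le (v : EuclideanSpace ℝ (Fin m × Fin d))
    (x : EuclideanSpace ℝ (Fin d)) :
    ∑ j, preactivation v x j ^ 2 ≤ ‖v‖ ^ 2 * ‖x‖ ^ 2 := by
  rw [EuclideanSpace.norm_sq_eq v, EuclideanSpace.norm_sq_eq x, Fintype.sum_prod_type,
    Finset.sum_mul]
  gcongr with j
  simp only [Real.norm_eq_abs, sq_abs]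
  exact Finset.sum_mul_sq_le_sq_mul_sq Finset.univ (fun i => v (j, i)) (fun i => x i)

lemma hasDerivAt_Phi_line (a : Fin m → ℝ) {σ : ℝ → ℝ} (hσ : Differentiable ℝ σ)
    (w v : EuclideanSpace ℝ (Fin m × Fin d)) (x : EuclideanSpace ℝ (Fin d)) (t : ℝ) :
    HasDerivAt (fun t => Phi a σ (w + t • v) x)
      (Phi (fun j => a j * preactivation v x j) (deriv σ) (w + t • v) x) t := by
  change HasDerivAt (fun t => 1 / √m * ∑ j, a j * σ (preactivation (w + t • v) x j))
    (1 / √m * ∑ j, a j * preactivation v x j * deriv σ (preactivation (w + t • v) x j)) t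
  simp only [preactivation_add_smul]
  refine (HasDerivAt.fun_sum fun j _ => ?_).const_mul _
  have hline : HasDerivAt (fun t => preactivation w x j + t * preactivation v x j)
      (preactivation v x j) t := by
    simpa using (hasDerivAt_mul_const (preactivation v x j)).const_add (preactivation w x j)
  exact (((hσ _).hasDerivAt.comp t hline).const_mul (a j)).congr_deriv (by ring)

lemma sq_Phi_le {b : Fin m → ℝ} {τ : ℝ → ℝ} {M : ℝ} (hτ : ∀ u, |τ u| ≤ M)
    (w : EuclideanSpace ℝ (Fin m × Fin d)) (x : EuclideanSpace ℝ (Fin d)) :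
    Phi b τ w x ^ 2 ≤ M ^ 2 * ∑ j, b j ^ 2 := by
  rcases Nat.eq_zero_or_pos m with rfl | hm
  · simp [Phi]
  have hτ2 : ∀ j, τ (preactivation w x j) ^ 2 ≤ M ^ 2 := fun j =>
    sq_le_sq' (abs_le.1 (hτ _)).1 (abs_le.1 (hτ _)).2
  calc Phi b τ w x ^ 2
      = (∑ j, b j * τ (preactivation w x j)) ^ 2 / m := by
        simp only [Phi, preactivation]
        rw [mul_pow, div_pow, one_pow, sq_sqrt (Nat.cast_nonneg m)]
        ring
    _ ≤ (∑ j, b j ^ 2) * (∑ _j : Fin m, M ^ 2) / m := by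
        gcongr
        exact (Finset.sum_mul_sq_le_sq_mul_sq _ _ _).trans
          (mul_le_mul_of_nonneg_left (Finset.sum_le_sum fun j _ => hτ2 j) (by positivity))
    _ = M ^ 2 * ∑ j, b j ^ 2 := by
        field_simp [(Nat.cast_pos.2 hm).ne']
        simp only [Finset.sum_const, Finset.card_univ, Fintype.card_fin, nsmul_eq_mul]
        ring

lemma abs_Phi_le {b : Fin m → ℝ} {τ : ℝ → ℝ} {M : ℝ} (hτ : ∀ u, |τ u| ≤ M)
    (w : EuclideanSpace ℝ (Fin m × Fin d)) (x : EuclideanSpace ℝ (Fin d)) :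
    |Phi b τ w x| ≤ M * (∑ j, |b j|) / √m := by
  rw [Phi, abs_mul, abs_of_nonneg (by positivity), one_div_mul_eq_div, Finset.mul_sum]
  gcongr
  refine (Finset.abs_sum_le_sum_abs _ _).trans (Finset.sum_le_sum fun j _ => ?_)
  rw [abs_mul, mul_comm]
  exact mul_le_mul_of_nonneg_right (hτ _) (abs_nonneg _)

lemma sq_mul_Phi_add_abs_mul_Phi_le {a : Fin m → ℝ} (ha : ∀ j, |a j| ≤ 1) {σ : ℝ → ℝ}
    {ℓ L R y : ℝ} (hσ' : ∀ u, |deriv σ u| ≤ ℓ) (hσ'' : ∀ u, |deriv (deriv σ) u| ≤ L)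
    (hy : |y| ≤ 1) {x : EuclideanSpace ℝ (Fin d)} (hx : ‖x‖ ≤ R)
    (w v : EuclideanSpace ℝ (Fin m × Fin d)) :
    (y * Phi (fun j => a j * preactivation v x j) (deriv σ) w x) ^ 2 +
      |y * Phi (fun j => a j * preactivation v x j * preactivation v x j) (deriv (deriv σ)) w x|
      ≤ smoothnessConst ℓ L R m * ‖v‖ ^ 2 := by
  set B := preactivation v x
  have hL : 0 ≤ L := (abs_nonneg _).trans (hσ'' 0)
  have hB : ∑ j, B j ^ 2 ≤ R ^ 2 * ‖v‖ ^ 2 :=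
    (sum_sq_preactivation_le v x).trans (by rw [mul_comm]; gcongr)
  have hfirst : (y * Phi (fun j => a j * B j) (deriv σ) w x) ^ 2 ≤ ℓ ^ 2 * ∑ j, B j ^ 2 := by
    calc _ ≤ Phi (fun j => a j * B j) (deriv σ) w x ^ 2 := by
          rw [mul_pow]
          exact mul_le_of_le_one_left (sq_nonneg _) (by nlinarith [sq_abs y, abs_nonneg y])
      _ ≤ ℓ ^ 2 * ∑ j, (a j * B j) ^ 2 := sq_Phi_le hσ' w x
      _ ≤ ℓ ^ 2 * ∑ j, B j ^ 2 := by
          refine mul_le_mul_of_nonneg_left (Finset.sum_le_sum fun j _ => ?_) (sq_nonneg ℓ)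
          rw [mul_pow, ← sq_abs (a j)]
          exact mul_le_of_le_one_left (sq_nonneg _) (pow_le_one₀ (abs_nonneg _) (ha j))
  have hsecond : |y * Phi (fun j => a j * B j * B j) (deriv (deriv σ)) w x|
      ≤ L * (∑ j, B j ^ 2) / √m := by
    calc _ ≤ |Phi (fun j => a j * B j * B j) (deriv (deriv σ)) w x| := by
          rw [abs_mul]
          exact mul_le_of_le_one_left (abs_nonneg _) hy
      _ ≤ L * (∑ j, |a j * B j * B j|) / √m := abs_Phi_le hσ'' w x
      _ ≤ L * (∑ j, B j ^ 2) / √m := by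
          gcongr with j
          rw [mul_assoc, abs_mul, abs_mul_self, ← sq]
          exact mul_le_of_le_one_left (sq_nonneg _) (ha j)
  calc _ ≤ ℓ ^ 2 * (∑ j, B j ^ 2) + L * (∑ j, B j ^ 2) / √m := add_le_add hfirst hsecond
    _ ≤ ℓ ^ 2 * (R ^ 2 * ‖v‖ ^ 2) + L * (R ^ 2 * ‖v‖ ^ 2) / √m := by gcongr
    _ = smoothnessConst ℓ L R m * ‖v‖ ^ 2 := by rw [smoothnessConst]; ring

end Network

lemma mul_sq_add_mul_le_mul {p q g u v : ℝ} (hp : p ≤ g) (hq : |q| ≤ g) :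
    p * u ^ 2 + q * v ≤ g * (u ^ 2 + |v|) := by
  have := mul_le_mul_of_nonneg_right hp (sq_nonneg u)
  have := (le_abs_self (q * v)).trans_eq (abs_mul q v)
  nlinarith [mul_le_mul_of_nonneg_right hq (abs_nonneg v)]

section EmpiricalLoss

variable {m d n : ℕ} {a : Fin m → ℝ} {σ f : ℝ → ℝ} {x : Fin n → EuclideanSpace ℝ (Fin d)}
  {y : Fin n → ℝ}

lemma empLoss_nonneg (hf : ∀ u, 0 ≤ f u) (w : EuclideanSpace ℝ (Fin m × Fin d)) :
    0 ≤ empLoss a σ f x y w :=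
  mul_nonneg (by positivity) (Finset.sum_nonneg fun i _ => hf _)

lemma empLoss_one_le (w : EuclideanSpace ℝ (Fin m × Fin d)) :
    empLoss a σ (fun _ => 1) x y w ≤ 1 := by
  simp only [empLoss, Finset.sum_const, Finset.card_univ, Fintype.card_fin, nsmul_eq_mul,
    mul_one, one_div]
  exact inv_mul_le_one_of_le₀ le_rfl (Nat.cast_nonneg n)

lemma differentiable_empLoss (hσ : Differentiable ℝ σ) (hf : Differentiable ℝ f) :
    Differentiable ℝ (empLoss (m := m) a σ f x y) := by
  unfold empLoss Phi
  fun_prop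

lemma exists_hasDerivAt_empLoss_line_le {ℓ L R : ℝ} (hσ : ContDiff ℝ 2 σ) (hf : ContDiff ℝ 2 f)
    (ha : ∀ j, |a j| ≤ 1) (hσ' : ∀ u, |deriv σ u| ≤ ℓ) (hσ'' : ∀ u, |deriv (deriv σ) u| ≤ L)
    (hx : ∀ i, ‖x i‖ ≤ R) (hy : ∀ i, |y i| ≤ 1) {g : ℝ → ℝ} (hf' : ∀ u, |deriv f u| ≤ g u)
    (hf'' : ∀ u, deriv (deriv f) u ≤ g u) (w v : EuclideanSpace ℝ (Fin m × Fin d)) :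
    ∃ ψ' ψ'' : ℝ → ℝ, (∀ t, HasDerivAt (fun t => empLoss a σ f x y (w + t • v)) (ψ' t) t) ∧
      (∀ t, HasDerivAt ψ' (ψ'' t) t) ∧
      ∀ t, ψ'' t ≤ smoothnessConst ℓ L R m * ‖v‖ ^ 2 * empLoss a σ g x y (w + t • v) := by
  set B := fun i => preactivation v (x i)
  set ζ : Fin n → ℝ → ℝ := fun i t => y i * Phi a σ (w + t • v) (x i)
  set ζ' : Fin n → ℝ → ℝ := fun i t =>
    y i * Phi (fun j => a j * B i j) (deriv σ) (w + t • v) (x i)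
  set ζ'' : Fin n → ℝ → ℝ := fun i t =>
    y i * Phi (fun j => a j * B i j * B i j) (deriv (deriv σ)) (w + t • v) (x i)
  have hζ : ∀ i t, HasDerivAt (ζ i) (ζ' i t) t := fun i t =>
    (hasDerivAt_Phi_line a (hσ.differentiable two_ne_zero) w v (x i) t).const_mul (y i)
  have hζ' : ∀ i t, HasDerivAt (ζ' i) (ζ'' i t) t := fun i t =>
    (hasDerivAt_Phi_line _ hσ.differentiable_deriv_two w v (x i) t).const_mul (y i)
  refine ⟨fun t => 1 / n * ∑ i, deriv f (ζ i t) * ζ' i t,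
    fun t => 1 / n * ∑ i, (deriv (deriv f) (ζ i t) * ζ' i t ^ 2 + deriv f (ζ i t) * ζ'' i t),
    fun t => ?_, fun t => ?_, fun t => ?_⟩
  · exact (HasDerivAt.fun_sum fun i _ =>
      ((hf.differentiable two_ne_zero _).hasDerivAt.comp t (hζ i t))).const_mul _
  · exact (HasDerivAt.fun_sum fun i _ =>
      (((hf.differentiable_deriv_two _).hasDerivAt.comp t (hζ i t)).mul (hζ' i t)).congr_deriv
        (by rw [Function.comp_apply]; ring)).const_mul _
  calc _ ≤ 1 / n * ∑ i, g (ζ i t) * (smoothnessConst ℓ L R m * ‖v‖ ^ 2) := by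
        refine mul_le_mul_of_nonneg_left (Finset.sum_le_sum fun i _ => ?_) (by positivity)
        exact (mul_sq_add_mul_le_mul (hf'' _) (hf' _)).trans (mul_le_mul_of_nonneg_left
          (sq_mul_Phi_add_abs_mul_Phi_le ha hσ' hσ'' (hy i) (hx i) _ v)
          ((abs_nonneg _).trans (hf' _)))
    _ = _ := by rw [empLoss, ← Finset.sum_mul]; ring

end EmpiricalLoss

theorem descent_lemma_general
    {m d n : ℕ} (ℓ L R η : ℝ)
    (a : Fin m → ℝ) (ha : ∀ j, a j = 1 ∨ a j = -1)
    (σ : ℝ → ℝ) (hσ : ContDiff ℝ 2 σ)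
    (hσ' : ∀ u, |deriv σ u| ≤ ℓ) (hσ'' : ∀ u, |deriv (deriv σ) u| ≤ L)
    (f : ℝ → ℝ) (hf : ContDiff ℝ 2 f)
    (x : Fin n → EuclideanSpace ℝ (Fin d)) (y : Fin n → ℝ)
    (hx : ∀ i, ‖x i‖ ≤ R) (hy : ∀ i, y i = 1 ∨ y i = -1)
    (hη : 0 < η)
    (w : EuclideanSpace ℝ (Fin m × Fin d)) :
    -- (i) self-bounded losses
    (((∀ u, |deriv f u| ≤ f u) ∧ (∀ u, deriv (deriv f) u ≤ f u) ∧
        η < (1 / (R ^ 2 * empLoss a σ f x y w))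
              * min (1 / (ℓ ^ 2 + L)) (1 / (Real.sqrt L * ℓ))) →
      empLoss a σ f x y (w - η • gradient (empLoss a σ f x y) w)
        ≤ empLoss a σ f x y w - (η / 2) * ‖gradient (empLoss a σ f x y) w‖ ^ 2)
    ∧
    -- (ii) 1-Lipschitz and 1-smooth losses
    (((∀ u, |deriv f u| ≤ 1) ∧ (∀ u, deriv (deriv f) u ≤ 1) ∧
        η ≤ 1 / (ℓ ^ 2 * R ^ 2 + L * R ^ 2 / Real.sqrt m)) →
      empLoss a σ f x y (w - η • gradient (empLoss a σ f x y) w)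
        ≤ empLoss a σ f x y w - (η / 2) * ‖gradient (empLoss a σ f x y) w‖ ^ 2) := by
  set F := empLoss a σ f x y
  have hF : Differentiable ℝ F :=
    differentiable_empLoss (hσ.differentiable two_ne_zero) (hf.differentiable two_ne_zero)
  have hL : 0 ≤ L := (abs_nonneg _).trans (hσ'' 0)
  have ha₁ : ∀ j, |a j| ≤ 1 := fun j => by rcases ha j with h | h <;> simp [h]
  have hy₁ : ∀ i, |y i| ≤ 1 := fun i => by rcases hy i with h | h <;> simp [h]
  constructor
  · rintro ⟨hf', hf'', hηi⟩
    obtain ⟨ψ', ψ'', hψ', hψ'', hle⟩ :=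
      exists_hasDerivAt_empLoss_line_le hσ hf ha₁ hσ' hσ'' hx hy₁ hf' hf'' w (-(η • gradient F w))
    have hF₀ : 0 ≤ F w := empLoss_nonneg (fun u => (abs_nonneg _).trans (hf' u)) w
    refine gradient_step_descent_of_deriv2_le_mul (β := smoothnessConst ℓ L R m) (hF w) hη.le
      (smoothnessConst_nonneg hL) hF₀
      (mul_mul_smoothnessConst_le_one hη.le hF₀ hL hηi) hψ' hψ'' fun t _ => ?_
    rw [← norm_neg]
    exact hle t
  · rintro ⟨hf', hf'', hηii⟩
    obtain ⟨ψ', ψ'', hψ', hψ'', hle⟩ := exists_hasDerivAt_empLoss_line_le (g := fun _ => 1)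
      hσ hf ha₁ hσ' hσ'' hx hy₁ hf' hf'' w (-(η • gradient F w))
    refine gradient_step_descent_of_deriv2_le (hF w) hη.le
      (mul_le_of_le_div₀ zero_le_one (smoothnessConst_nonneg hL) hηii) hψ' hψ'' fun t _ => ?_
    rw [← norm_neg]
    exact (hle t).trans (mul_le_of_le_one_right
      (mul_nonneg (smoothnessConst_nonneg hL) (sq_nonneg _)) (empLoss_one_le _))

/-- descent lemma, both for self-bounded losses (part (i)) and for
1-Lipschitz 1-smooth losses (part (ii)). -/
theorem descent_lemma
    {m d n : ℕ} (ℓ L R η : ℝ)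
    (a : Fin m → ℝ) (ha : ∀ j, a j = 1 ∨ a j = -1)
    (σ : ℝ → ℝ) (hσ : ContDiff ℝ 2 σ)
    (hσ' : ∀ u, |deriv σ u| ≤ ℓ) (hσ'' : ∀ u, |deriv (deriv σ) u| ≤ L)
    (f : ℝ → ℝ) (hf : ContDiff ℝ 2 f) (hfconv : ConvexOn ℝ Set.univ f)
    (hfnonneg : ∀ u, 0 ≤ f u)
    (x : Fin n → EuclideanSpace ℝ (Fin d)) (y : Fin n → ℝ)
    (hx : ∀ i, ‖x i‖ ≤ R) (hy : ∀ i, y i = 1 ∨ y i = -1)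
    (hη : 0 < η)
    (w : EuclideanSpace ℝ (Fin m × Fin d)) :
    -- (i) self-bounded losses
    (((∀ u, |deriv f u| ≤ f u) ∧ (∀ u, deriv (deriv f) u ≤ f u) ∧
        η < (1 / (R ^ 2 * empLoss a σ f x y w))
              * min (1 / (ℓ ^ 2 + L)) (1 / (Real.sqrt L * ℓ))) →
      empLoss a σ f x y (w - η • gradient (empLoss a σ f x y) w)
        ≤ empLoss a σ f x y w - (η / 2) * ‖gradient (empLoss a σ f x y) w‖ ^ 2)
    ∧
    -- (ii) 1-Lipschitz and 1-smooth losses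
    (((∀ u, |deriv f u| ≤ 1) ∧ (∀ u, deriv (deriv f) u ≤ 1) ∧
        η ≤ 1 / (ℓ ^ 2 * R ^ 2 + L * R ^ 2 / Real.sqrt m)) →
      empLoss a σ f x y (w - η • gradient (empLoss a σ f x y) w)
        ≤ empLoss a σ f x y w - (η / 2) * ‖gradient (empLoss a σ f x y) w‖ ^ 2) :=
  descent_lemma_general ℓ L R η a ha σ hσ hσ' hσ'' f hf x y hx hy hη w
end
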